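/- arXiv:math/0608789 — 7 statements merged into one kernel-verified Lean document; each statement's English description precedes it below -/
import Mathlib

section
/- For every real number x with 0 ≤ x ≤ 1, the inequality Γ(x + 1) < x² − (7/4)x + 9/5 holds, where Γ denotes the Euler gamma function. -/
theorem gamma_lt_quadratic (x : ℝ) (hx : 0 ≤ x) (hx' : x ≤ 1) :
    Real.Gamma (x + 1) < x ^ 2 - (7 / 4) * x + 9 / 5 := by
  have hconv := Real.convexOn_Gamma
  have h := hconv.2 (Set.mem_Ioi.mpr one_pos) (Set.mem_Ioi.mpr two_pos)
    (by linarith : (0:ℝ) ≤ 1 - x) hx (by ring : (1 - x) + x = 1)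
  have heq : (1-x) • (1:ℝ) + x • (2:ℝ) = x + 1 := by
    simp [smul_eq_mul]; ring
  rw [heq, Real.Gamma_one, Real.Gamma_two] at h
  simp only [smul_eq_mul, mul_one] at h
  nlinarith [sq_nonneg (x - 7/8)]
end

section
/- For every real number x with 0 ≤ x ≤ 1, K(x) ≤ c·x, where K(0) = 0, K(x) = ∫₀^∞ e^{−t} (t^x − 1)/(t − 1) dt for x ∈ (0,1], and c = ∫₀^∞ e^{−t} (ln t)/(t − 1) dt. -/
open MeasureTheory

/-- The Kurepa function, defined for `0 ≤ x` by
`K(x) = ∫₀^∞ e^{−t} (t^x − 1)/(t − 1) dt`.  (For `x = 0` the integrand vanishes,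
so this definition also gives `K(0) = 0`.) -/
noncomputable def kurepa (x : ℝ) : ℝ :=
  ∫ t in Set.Ioi (0 : ℝ), Real.exp (-t) * (t ^ x - 1) / (t - 1)

/-- The constant `c = K′(0) = ∫₀^∞ e^{−t} (ln t)/(t − 1) dt`. -/
noncomputable def kurepaDerivZero : ℝ :=
  ∫ t in Set.Ioi (0 : ℝ), Real.exp (-t) * Real.log t / (t - 1)

/-!
Put `v = log t`. Convexity of `exp` makes `v ↦ (e^{xv} - 1 - xv) - x²(e^v - 1 - v)` antitone, and the
second-order Taylor bound for `log` at `1` gives `(t - 1 - log t) / (t - 1) ≤ (t - 1) / 2`. Together: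
`(t^x - 1) / (t - 1) ≤ x · log t / (t - 1) + x² (t - 1) / 2`.
Integrating against `e^{-t}` kills the last term, because `∫₀^∞ e^{-t} (t - 1) dt = Γ(2) - Γ(1) = 0`.
The integrand of `c` is integrable because `log t / (t - 1) ≤ t^{-1/2}`: the logarithmic mean of
`1` and `t` dominates their geometric mean.
-/

open Real Set

namespace Kurepa

lemma antitone_exp_mul_sub_sq_mul {x : ℝ} (hx0 : 0 ≤ x) (hx1 : x ≤ 1) :
    Antitone fun v ↦ (exp (x * v) - 1 - x * v) - x ^ 2 * (exp v - 1 - v) := by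
  refine antitone_of_hasDerivAt_nonpos
    (f' := fun v ↦ x * ((exp (x * v) - 1) - x * (exp v - 1))) (fun v ↦ ?_) fun v ↦ ?_
  · have hlin : HasDerivAt (fun v ↦ x * v) x v := by simpa using (hasDerivAt_id v).const_mul x
    exact (((hlin.exp.sub_const 1).sub hlin).sub
      ((((hasDerivAt_exp v).sub_const 1).sub (hasDerivAt_id v)).const_mul (x ^ 2))).congr_deriv
      (by ring)
  · have hconvex : exp (x * v) ≤ 1 - x + x * exp v := by
      simpa using convexOn_exp.2 (mem_univ 0) (mem_univ v) (sub_nonneg.2 hx1) hx0 (by ring)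
    simp only [Pi.zero_apply]
    nlinarith [mul_le_mul_of_nonneg_left hconvex hx0]

lemma monotone_sub_exp_sub_one_add_sq :
    Monotone fun v ↦ v - (exp v - 1) + (exp v - 1) ^ 2 / 2 := by
  refine monotone_of_hasDerivAt_nonneg (f' := fun v ↦ (exp v - 1) ^ 2) (fun v ↦ ?_) fun v ↦ ?_
  · exact (((hasDerivAt_id v).sub ((hasDerivAt_exp v).sub_const 1)).add
      ((((hasDerivAt_exp v).sub_const 1).pow 2).div_const 2)).congr_deriv (by simp; ring)
  · exact sq_nonneg _

lemma exp_mul_sub_one_sub_mul_div_le {x : ℝ} (hx0 : 0 ≤ x) (hx1 : x ≤ 1) (v : ℝ) :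
    (exp (x * v) - 1 - x * v) / (exp v - 1) ≤ x ^ 2 / 2 * (exp v - 1) := by
  have hH := antitone_exp_mul_sub_sq_mul hx0 hx1
  have hG := monotone_sub_exp_sub_one_add_sq
  rcases lt_trichotomy v 0 with hv | rfl | hv
  · have h1 : _ ≤ _ := hH hv.le
    have h2 : _ ≤ _ := hG hv.le
    simp only [mul_zero, exp_zero, sub_self] at h1 h2
    rw [div_le_iff_of_neg (by simpa using hv)]
    nlinarith [sq_nonneg x]
  · simp
  · have h1 : _ ≤ _ := hH hv.le
    have h2 : _ ≤ _ := hG hv.le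
    simp only [mul_zero, exp_zero, sub_self] at h1 h2
    rw [div_le_iff₀ (by simpa using hv)]
    nlinarith [sq_nonneg x]

lemma rpow_sub_one_div_sub_one_le {t x : ℝ} (ht : 0 < t) (hx0 : 0 ≤ x) (hx1 : x ≤ 1) :
    (t ^ x - 1) / (t - 1) ≤ x * (log t / (t - 1)) + x ^ 2 / 2 * (t - 1) := by
  have h := exp_mul_sub_one_sub_mul_div_le hx0 hx1 (log t)
  rw [exp_log ht, mul_comm, ← rpow_def_of_pos ht] at h
  calc (t ^ x - 1) / (t - 1) = x * (log t / (t - 1)) + (t ^ x - 1 - log t * x) / (t - 1) := by ring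
    _ ≤ _ := add_le_add_right h _

lemma rpow_sub_one_div_sub_one_nonneg {t x : ℝ} (ht : 0 < t) (hx : 0 ≤ x) :
    0 ≤ (t ^ x - 1) / (t - 1) := by
  rcases le_total t 1 with h | h
  · exact div_nonneg_of_nonpos (by linarith [rpow_le_one ht.le h hx]) (by linarith)
  · exact div_nonneg (by linarith [one_le_rpow h hx]) (by linarith)

lemma div_sinh_le_one (w : ℝ) : w / sinh w ≤ 1 := by
  rcases lt_trichotomy w 0 with hw | rfl | hw
  · exact (div_le_one_of_neg (sinh_neg_iff.2 hw)).2 (sinh_le_self_iff.2 hw.le)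
  · simp
  · exact (div_le_one (sinh_pos_iff.2 hw)).2 (self_le_sinh_iff.2 hw.le)

lemma log_div_sub_one_le_rpow {t : ℝ} (ht : 0 < t) : log t / (t - 1) ≤ t ^ (-(1 / 2) : ℝ) := by
  set w := log t / 2
  have hlog : log t = 2 * w := by ring
  have hsub : t - 1 = exp w * (2 * sinh w) := by
    rw [sinh_eq, ← exp_log ht, hlog, exp_neg]
    field_simp
    rw [sq, ← exp_add, two_mul]
  have hrpow : t ^ (-(1 / 2) : ℝ) = (exp w)⁻¹ := by
    rw [rpow_def_of_pos ht, ← exp_neg, hlog]; ring_nf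
  calc log t / (t - 1) = w / sinh w * (exp w)⁻¹ := by
        rw [hlog, hsub]; field_simp
    _ ≤ 1 * (exp w)⁻¹ := by gcongr; exact div_sinh_le_one w
    _ = t ^ (-(1 / 2) : ℝ) := by rw [one_mul, hrpow]

lemma log_div_sub_one_nonneg {t : ℝ} (ht : 0 < t) : 0 ≤ log t / (t - 1) := by
  rcases le_total t 1 with h | h
  · exact div_nonneg_of_nonpos (log_nonpos ht.le h) (by linarith)
  · exact div_nonneg (log_nonneg h) (by linarith)

lemma integrableOn_exp_neg_mul_log_div :
    IntegrableOn (fun t ↦ exp (-t) * log t / (t - 1)) (Ioi 0) := by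
  have hGamma : IntegrableOn (fun t ↦ exp (-t) * t ^ (-(1 / 2) : ℝ)) (Ioi 0) := by
    convert GammaIntegral_convergent (s := 1 / 2) (by norm_num) using 4; norm_num
  refine hGamma.mono' ?_ ((ae_restrict_mem measurableSet_Ioi).mono fun t (ht : 0 < t) ↦ ?_)
  · exact (by fun_prop : Measurable fun t ↦ exp (-t) * log t / (t - 1)).aestronglyMeasurable
  · rw [mul_div_assoc, norm_mul, Real.norm_of_nonneg (exp_pos _).le,
      Real.norm_of_nonneg (log_div_sub_one_nonneg ht)]
    gcongr
    exact log_div_sub_one_le_rpow ht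

lemma integrableOn_exp_neg : IntegrableOn (fun t ↦ exp (-t)) (Ioi 0) := by
  simpa using exp_neg_integrableOn_Ioi 0 one_pos

lemma integrableOn_exp_neg_mul_self : IntegrableOn (fun t ↦ exp (-t) * t) (Ioi 0) := by
  convert GammaIntegral_convergent (s := 2) two_pos using 3; norm_num

lemma integral_exp_neg_mul_self : ∫ t in Ioi (0 : ℝ), exp (-t) * t = 1 := by
  rw [← Gamma_two, Gamma_eq_integral two_pos]; norm_num

lemma integrableOn_exp_neg_mul_sub_one : IntegrableOn (fun t ↦ exp (-t) * (t - 1)) (Ioi 0) := by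
  simp_rw [mul_sub_one]
  exact integrableOn_exp_neg_mul_self.sub integrableOn_exp_neg

lemma integral_exp_neg_mul_sub_one : ∫ t in Ioi (0 : ℝ), exp (-t) * (t - 1) = 0 := by
  simp_rw [mul_sub_one]
  rw [integral_sub integrableOn_exp_neg_mul_self integrableOn_exp_neg, integral_exp_neg_mul_self,
    integral_exp_neg_Ioi_zero, sub_self]

end Kurepa

open Kurepa in
theorem kurepa_le (x : ℝ) (hx : 0 ≤ x) (hx' : x ≤ 1) :
    kurepa x ≤ kurepaDerivZero * x := by
  have hlog := integrableOn_exp_neg_mul_log_div.const_mul x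
  have hsub := integrableOn_exp_neg_mul_sub_one.const_mul (x ^ 2 / 2)
  calc kurepa x
      ≤ ∫ t in Ioi 0, x * (exp (-t) * log t / (t - 1)) + x ^ 2 / 2 * (exp (-t) * (t - 1)) := by
        -- nonnegativity of the Kurepa integrand stands in for its integrability
        refine setIntegral_mono_of_nonneg (fun t (ht : 0 < t) ↦ ?_) (fun t (ht : 0 < t) ↦ ?_)
          (hlog.add hsub)
        · rw [mul_div_assoc]
          exact mul_nonneg (exp_pos _).le (rpow_sub_one_div_sub_one_nonneg ht hx)
        · calc exp (-t) * (t ^ x - 1) / (t - 1) = exp (-t) * ((t ^ x - 1) / (t - 1)) :=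
                mul_div_assoc ..
            _ ≤ exp (-t) * (x * (log t / (t - 1)) + x ^ 2 / 2 * (t - 1)) := by
              gcongr; exact rpow_sub_one_div_sub_one_le ht hx hx'
            _ = _ := by ring
    _ = kurepaDerivZero * x := by
        rw [integral_add hlog hsub, integral_const_mul, integral_const_mul,
          integral_exp_neg_mul_sub_one, kurepaDerivZero]
        ring
end

section
/- For every real number x with 0 < x ≤ 1, the strict inequality K(x) < c·x holds, where K(x) = ∫₀^∞ e^{−t} (t^x − 1)/(t − 1) dt and c = ∫₀^∞ e^{−t} (ln t)/(t − 1) dt. -/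
open MeasureTheory

/-!
The difference `c·x − K(x)` is the integral over `(0, ∞)` of
`g(t) = e^{−t} (x log t − (t^x − 1)) / (t − 1)`, which is positive on `(0, 1)` and negative on
`(1, ∞)`. Folding `(1, ∞)` onto `(0, 1)` by `t = 1/s` turns it into the integral of
`g(s) + g(1/s) / s²`, and this is positive pointwise: with `a = s^x ∈ [s, 1)` it amounts to
`e^{−1/s} (1/a − 1 + log a) < s e^{−s} (a − 1 − log a)`, which follows from
`e^{−1/s} ≤ s² e^{−s}` (that is, `2 log u ≤ u − 1/u` for `u ≥ 1`) and the Padé-type bound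
`(1 + a) log a < 2 (a − 1)` for `0 < a < 1`.
-/

open Set Real

lemma two_mul_abs_log_le_abs_sub_inv {u : ℝ} (hu : 0 < u) : 2 * |log u| ≤ |u - u⁻¹| := by
  have h := self_le_sinh_iff.2 (abs_nonneg (log u))
  rw [← abs_sinh, sinh_log hu, abs_div, abs_two] at h
  linarith

lemma two_mul_log_le_sub_inv {u : ℝ} (hu : 1 ≤ u) : 2 * log u ≤ u - u⁻¹ := by
  have h := self_le_sinh_iff.2 (log_nonneg hu)
  rw [sinh_log (by linarith)] at h
  linarith

lemma exp_neg_inv_le_sq_mul_exp_neg {s : ℝ} (hs0 : 0 < s) (hs1 : s ≤ 1) :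
    exp (-s⁻¹) ≤ s ^ 2 * exp (-s) := by
  have h := two_mul_log_le_sub_inv ((one_le_inv₀ hs0).2 hs1)
  rw [log_inv, inv_inv] at h
  rw [← exp_log (pow_pos hs0 2), ← exp_add, exp_le_exp, log_pow]
  push_cast
  linarith

lemma one_add_mul_log_lt {a : ℝ} (ha0 : 0 < a) (ha1 : a < 1) :
    (1 + a) * log a < 2 * (a - 1) := by
  have h := lt_log_one_add_of_pos (sub_pos.2 ((one_lt_inv₀ ha0).2 ha1))
  have e : a⁻¹ - 1 + 2 = (1 + a) / a := by field_simp; ring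
  rw [add_sub_cancel, log_inv, e, div_div_eq_mul_div, div_lt_iff₀ (by positivity), mul_assoc,
    sub_mul, inv_mul_cancel₀ ha0.ne', one_mul] at h
  linarith

lemma exp_neg_inv_mul_lt {s a : ℝ} (hs : 0 < s) (hsa : s ≤ a) (ha : a < 1) :
    exp (-s⁻¹) * (a⁻¹ - 1 + log a) < s * exp (-s) * (a - 1 - log a) := by
  have ha0 : 0 < a := hs.trans_le hsa
  have hP : 0 < a - 1 - log a := by linarith [log_lt_sub_one_of_pos ha0 ha.ne]
  have hQP : a⁻¹ - 1 + log a < (a - 1 - log a) / a := by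
    rw [lt_div_iff₀ ha0, add_mul, sub_mul, inv_mul_cancel₀ ha0.ne']
    nlinarith [one_add_mul_log_lt ha0 ha]
  calc exp (-s⁻¹) * (a⁻¹ - 1 + log a) < exp (-s⁻¹) * ((a - 1 - log a) / a) :=
        mul_lt_mul_of_pos_left hQP (exp_pos _)
    _ ≤ s ^ 2 * exp (-s) * ((a - 1 - log a) / s) :=
        mul_le_mul (exp_neg_inv_le_sq_mul_exp_neg hs (hsa.trans ha.le))
          (div_le_div_of_nonneg_left hP.le hs hsa) (by positivity) (by positivity)
    _ = s * exp (-s) * (a - 1 - log a) := by field_simp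

lemma abs_rpow_sub_one_le {x t : ℝ} (hx0 : 0 ≤ x) (hx1 : x ≤ 1) (ht : 0 ≤ t) :
    |t ^ x - 1| ≤ |t - 1| := by
  rcases le_total t 1 with h | h
  · rw [abs_of_nonpos (sub_nonpos.2 (rpow_le_one ht h hx0)), abs_of_nonpos (sub_nonpos.2 h)]
    linarith [self_le_rpow_of_le_one ht h hx1]
  · rw [abs_of_nonneg (sub_nonneg.2 (one_le_rpow h hx0)), abs_of_nonneg (sub_nonneg.2 h)]
    linarith [rpow_le_self_of_one_le h hx1]

lemma abs_log_div_sub_one_le {t : ℝ} (ht : 0 < t) : |log t / (t - 1)| ≤ (√t)⁻¹ := by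
  have hu : 0 < √t := sqrt_pos.2 ht
  have hlog : log t = 2 * log √t := by rw [log_sqrt ht.le]; ring
  have hsub : t - 1 = √t * (√t - (√t)⁻¹) := by
    rw [mul_sub, mul_inv_cancel₀ hu.ne', mul_self_sqrt ht.le]
  rw [abs_div]
  refine div_le_of_le_mul₀ (abs_nonneg _) (inv_nonneg.2 hu.le) ?_
  rw [hlog, hsub, abs_mul, abs_mul, abs_two, abs_of_pos hu, inv_mul_cancel_left₀ hu.ne']
  exact two_mul_abs_log_le_abs_sub_inv hu

lemma integrableOn_kurepa_integrand {x : ℝ} (hx0 : 0 ≤ x) (hx1 : x ≤ 1) :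
    IntegrableOn (fun t => exp (-t) * (t ^ x - 1) / (t - 1)) (Ioi 0) := by
  refine Integrable.mono' (exp_neg_integrableOn_Ioi 0 one_pos)
    (Measurable.aestronglyMeasurable (by fun_prop)) ?_
  filter_upwards [ae_restrict_mem measurableSet_Ioi] with t (ht : 0 < t)
  rw [norm_div, norm_mul, norm_of_nonneg (exp_pos _).le, mul_div_assoc, neg_one_mul]
  exact mul_le_of_le_one_right (exp_pos _).le
    (div_le_one_of_le₀ (abs_rpow_sub_one_le hx0 hx1 ht.le) (abs_nonneg _))

lemma integrableOn_exp_neg_mul_log_div_sub_one :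
    IntegrableOn (fun t => exp (-t) * log t / (t - 1)) (Ioi 0) := by
  refine Integrable.mono' (GammaIntegral_convergent (by norm_num : (0 : ℝ) < 1 / 2))
    (Measurable.aestronglyMeasurable (by fun_prop)) ?_
  filter_upwards [ae_restrict_mem measurableSet_Ioi] with t (ht : 0 < t)
  rw [norm_div, norm_mul, norm_of_nonneg (exp_pos _).le, mul_div_assoc, ← norm_div,
    show (1 / 2 : ℝ) - 1 = -(1 / 2) by norm_num, rpow_neg ht.le, ← sqrt_eq_rpow]
  exact mul_le_mul_of_nonneg_left (abs_log_div_sub_one_le ht) (exp_pos _).le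

section InvSubstitution

variable {E : Type*} [NormedAddCommGroup E] [NormedSpace ℝ E]

lemma image_inv_Ioo_zero_one : (·⁻¹) '' Ioo (0 : ℝ) 1 = Ioi 1 := by
  rw [image_inv_eq_inv, inv_Ioo_0_left one_pos, inv_one]

lemma hasDerivWithinAt_inv_Ioo_zero_one {s : ℝ} (hs : s ∈ Ioo (0 : ℝ) 1) :
    HasDerivWithinAt (·⁻¹) (-(s ^ 2)⁻¹) (Ioo 0 1) s :=
  (hasDerivAt_inv hs.1.ne').hasDerivWithinAt

lemma integrableOn_Ioi_one_iff_inv (f : ℝ → E) :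
    IntegrableOn f (Ioi 1) ↔ IntegrableOn (fun s => (s ^ 2)⁻¹ • f s⁻¹) (Ioo 0 1) := by
  rw [← image_inv_Ioo_zero_one, integrableOn_image_iff_integrableOn_abs_deriv_smul
    measurableSet_Ioo (fun s => hasDerivWithinAt_inv_Ioo_zero_one) inv_injective.injOn]
  simp only [abs_neg, abs_inv, abs_sq]

lemma integral_Ioi_one_eq_inv (f : ℝ → E) :
    ∫ t in Ioi 1, f t = ∫ s in Ioo 0 1, (s ^ 2)⁻¹ • f s⁻¹ := by
  rw [← image_inv_Ioo_zero_one, integral_image_eq_integral_abs_deriv_smul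
    measurableSet_Ioo (fun s => hasDerivWithinAt_inv_Ioo_zero_one) inv_injective.injOn]
  simp only [abs_neg, abs_inv, abs_sq]

end InvSubstitution

lemma integral_Ioi_zero_pos_of_add_inv_pos {f : ℝ → ℝ} (hf : IntegrableOn f (Ioi 0))
    (hpos : ∀ s ∈ Ioo (0 : ℝ) 1, 0 < f s + (s ^ 2)⁻¹ * f s⁻¹) :
    0 < ∫ t in Ioi 0, f t := by
  have h01 : IntegrableOn f (Ioo 0 1) := hf.mono_set Ioo_subset_Ioi_self
  have h1 : IntegrableOn f (Ioi 1) := hf.mono_set (Ioi_subset_Ioi zero_le_one)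
  have hinv := (integrableOn_Ioi_one_iff_inv f).1 h1
  have hsupp : Ioo 0 1 ⊆ Function.support fun s => f s + (s ^ 2)⁻¹ * f s⁻¹ :=
    fun s hs => (hpos s hs).ne'
  calc 0 < ∫ s in Ioo 0 1, (f s + (s ^ 2)⁻¹ * f s⁻¹) := by
        rw [setIntegral_pos_iff_support_of_nonneg_ae
          ((ae_restrict_mem measurableSet_Ioo).mono fun s hs => (hpos s hs).le) (h01.add hinv),
          inter_eq_self_of_subset_right hsupp]
        simp
    _ = (∫ s in Ioo 0 1, f s) + ∫ s in Ioo 0 1, (s ^ 2)⁻¹ • f s⁻¹ := integral_add h01 hinv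
    _ = (∫ s in Ioc 0 1, f s) + ∫ t in Ioi 1, f t := by
        rw [integral_Ioi_one_eq_inv, integral_Ioc_eq_integral_Ioo]
    _ = ∫ t in Ioi 0, f t := by
        rw [← setIntegral_union (Ioc_disjoint_Ioi le_rfl) measurableSet_Ioi
          (hf.mono_set Ioc_subset_Ioi_self) h1, Ioc_union_Ioi_eq_Ioi zero_le_one]

noncomputable def kurepaGapIntegrand (x t : ℝ) : ℝ :=
  exp (-t) * (x * log t - (t ^ x - 1)) / (t - 1)

lemma kurepaGapIntegrand_add_inv_pos {x s : ℝ} (hx0 : 0 < x) (hx1 : x ≤ 1) (hs0 : 0 < s)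
    (hs1 : s < 1) : 0 < kurepaGapIntegrand x s + (s ^ 2)⁻¹ * kurepaGapIntegrand x s⁻¹ := by
  have hlog : x * log s = log (s ^ x) := (log_rpow hs0 x).symm
  have hinv : s⁻¹ ^ x = (s ^ x)⁻¹ := inv_rpow hs0.le x
  have hsum : kurepaGapIntegrand x s + (s ^ 2)⁻¹ * kurepaGapIntegrand x s⁻¹ =
      (s * exp (-s) * (s ^ x - 1 - log (s ^ x)) -
        exp (-s⁻¹) * ((s ^ x)⁻¹ - 1 + log (s ^ x))) / (s * (1 - s)) := by
    have h1s : 1 - s ≠ 0 := (sub_pos.2 hs1).ne'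
    have hs1ne : s - 1 ≠ 0 := (sub_neg.2 hs1).ne
    rw [kurepaGapIntegrand, kurepaGapIntegrand, log_inv, hinv, mul_neg, hlog]
    field_simp
    ring
  rw [hsum]
  exact div_pos (sub_pos.2 (exp_neg_inv_mul_lt hs0 (self_le_rpow_of_le_one hs0.le hs1.le hx1)
    (rpow_lt_one hs0.le hs1 hx0))) (mul_pos hs0 (sub_pos.2 hs1))

lemma kurepaGapIntegrand_eq (x : ℝ) : kurepaGapIntegrand x =
    fun t => x * (exp (-t) * log t / (t - 1)) - exp (-t) * (t ^ x - 1) / (t - 1) := by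
  ext t
  rw [kurepaGapIntegrand]
  ring

lemma integrableOn_kurepaGapIntegrand {x : ℝ} (hx0 : 0 ≤ x) (hx1 : x ≤ 1) :
    IntegrableOn (kurepaGapIntegrand x) (Ioi 0) := by
  rw [kurepaGapIntegrand_eq]
  exact (integrableOn_exp_neg_mul_log_div_sub_one.const_mul x).sub
    (integrableOn_kurepa_integrand hx0 hx1)

lemma integral_kurepaGapIntegrand {x : ℝ} (hx0 : 0 ≤ x) (hx1 : x ≤ 1) :
    ∫ t in Ioi 0, kurepaGapIntegrand x t = kurepaDerivZero * x - kurepa x := by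
  rw [kurepaGapIntegrand_eq, integral_sub (integrableOn_exp_neg_mul_log_div_sub_one.const_mul x)
    (integrableOn_kurepa_integrand hx0 hx1), integral_const_mul, kurepaDerivZero, kurepa,
    mul_comm]

theorem kurepa_lt (x : ℝ) (hx : 0 < x) (hx' : x ≤ 1) :
    kurepa x < kurepaDerivZero * x := by
  have h := integral_Ioi_zero_pos_of_add_inv_pos (integrableOn_kurepaGapIntegrand hx.le hx')
    fun s hs => kurepaGapIntegrand_add_inv_pos hx hx' hs.1 hs.2
  rw [integral_kurepaGapIntegrand hx.le hx'] at h
  linarith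
end

section
/- The function x ↦ (c·x − K(x))/x² tends, as x → 0⁺, to the limit α = −(1/2)·∫₀^∞ e^{−t} (ln t)²/(t − 1) dt, and moreover α > 0, where K(x) = ∫₀^∞ e^{−t} (t^x − 1)/(t − 1) dt and c = ∫₀^∞ e^{−t} (ln t)/(t − 1) dt. -/
open MeasureTheory Filter

section Aux
open Set Real

lemma exp_taylor2_bound (v : ℝ) : |Real.exp v - 1 - v| ≤ v^2 * Real.exp |v| := by
  rcases le_or_gt 0 v with hv | hv
  · rw [abs_of_nonneg hv, abs_of_nonneg (by nlinarith [Real.add_one_le_exp v])]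
    have hm : Real.exp v * Real.exp (-v) = 1 := by rw [← Real.exp_add]; simp
    have h2 : 1 - v ≤ Real.exp (-v) := by linarith [Real.add_one_le_exp (-v)]
    have h1 : Real.exp v - 1 ≤ v * Real.exp v := by
      nlinarith [mul_le_mul_of_nonneg_left h2 (Real.exp_pos v).le]
    nlinarith [Real.add_one_le_exp v, Real.exp_pos v]
  · rw [abs_of_neg hv]
    have hlow : 1 + v ≤ Real.exp v := by linarith [Real.add_one_le_exp v]
    have hup : Real.exp v ≤ 1 + v + v^2 := by
      rcases le_or_gt (-1) v with h1 | h1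
      · -- -1 ≤ v < 0 : exp v ≤ 1/(1-v) ≤ 1+v+v²
        have h2 : Real.exp (-v) ≥ 1 - v := by linarith [Real.add_one_le_exp (-v)]
        have h3 : Real.exp v * Real.exp (-v) = 1 := by
          rw [← Real.exp_add]; simp
        nlinarith [Real.exp_pos v]
      · have : Real.exp v ≤ 1 := Real.exp_le_one_iff.mpr hv.le
        nlinarith
    have := Real.exp_pos (-v)
    rw [abs_of_nonneg (by nlinarith)]
    nlinarith [Real.one_le_exp (by linarith : (0:ℝ) ≤ -v)]

lemma neg_log_le (t : ℝ) (h0 : 0 < t) : -Real.log t ≤ 8 * t ^ (-(1/8) : ℝ) := by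
  have := Real.log_le_rpow_div (by positivity : (0:ℝ) ≤ t⁻¹) (by norm_num : (0:ℝ) < 1/8)
  rw [Real.log_inv, Real.inv_rpow h0.le, ← Real.rpow_neg h0.le] at this
  linarith [this]

lemma log_sq_le (t : ℝ) (h0 : 0 < t) (h1 : t ≤ 1) : (Real.log t)^2 ≤ 64 * t ^ (-(1/4) : ℝ) := by
  have h2 : -Real.log t ≤ 8 * t ^ (-(1/8) : ℝ) := neg_log_le t h0
  have h3 : 0 ≤ -Real.log t := by
    simpa using Real.log_nonpos h0.le h1
  have h4 : (Real.log t)^2 = (-Real.log t)^2 := by ring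
  have h5 : (8 * t ^ (-(1/8) : ℝ))^2 = 64 * t ^ (-(1/4) : ℝ) := by
    rw [mul_pow, ← Real.rpow_natCast (t ^ (-(1/8):ℝ)) 2, ← Real.rpow_mul h0.le]
    norm_num
  rw [h4, ← h5]
  exact pow_le_pow_left₀ h3 h2 2

noncomputable def Hfun (t : ℝ) : ℝ :=
  256 * (Real.exp (-t) * t ^ (-(3/4) : ℝ)) + 6 * Real.exp (-t) + Real.exp (-t) * t ^ (2 : ℝ)

lemma integrable_H : IntegrableOn Hfun (Ioi (0:ℝ)) := by
  have h1 : IntegrableOn (fun t : ℝ => Real.exp (-t) * t ^ ((1/4 : ℝ) - 1)) (Ioi 0) :=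
    Real.GammaIntegral_convergent (by norm_num)
  have h2 : IntegrableOn (fun t : ℝ => Real.exp (-t) * t ^ ((1 : ℝ) - 1)) (Ioi 0) :=
    Real.GammaIntegral_convergent (by norm_num)
  have h3 : IntegrableOn (fun t : ℝ => Real.exp (-t) * t ^ ((3 : ℝ) - 1)) (Ioi 0) :=
    Real.GammaIntegral_convergent (by norm_num)
  have e1 : IntegrableOn (fun t : ℝ => 256 * (Real.exp (-t) * t ^ (-(3/4) : ℝ))) (Ioi 0) := by
    refine IntegrableOn.congr_fun (h1.const_mul 256) (fun t ht => ?_) measurableSet_Ioi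
    norm_num
  have e2 : IntegrableOn (fun t : ℝ => 6 * Real.exp (-t)) (Ioi 0) := by
    refine IntegrableOn.congr_fun (h2.const_mul 6) (fun t ht => ?_) measurableSet_Ioi
    rw [show (1:ℝ) - 1 = 0 by norm_num, Real.rpow_zero]
    ring
  have e3 : IntegrableOn (fun t : ℝ => Real.exp (-t) * t ^ (2:ℝ)) (Ioi 0) := by
    refine IntegrableOn.congr_fun h3 (fun t ht => ?_) measurableSet_Ioi
    norm_num
  exact (e1.add e2).add e3

lemma H_nonneg (t : ℝ) (ht : 0 < t) : 0 ≤ Hfun t := by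
  unfold Hfun; positivity

noncomputable def Gfun (t : ℝ) : ℝ :=
  Real.exp (-t) * (Real.log t)^2 * (Real.sqrt t + (Real.sqrt t)⁻¹) / |t - 1|

lemma abs_log_le_two (t : ℝ) (ht : 1/2 ≤ t) : |Real.log t| ≤ 2 * |t - 1| := by
  rcases le_or_gt 1 t with h1 | h1
  · rw [abs_of_nonneg (Real.log_nonneg h1), abs_of_nonneg (by linarith)]
    have := Real.log_le_sub_one_of_pos (by linarith : (0:ℝ) < t)
    linarith
  · have ht0 : (0:ℝ) < t := by linarith
    rw [abs_of_nonpos (Real.log_nonpos ht0.le h1.le), abs_of_neg (by linarith)]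
    have h2 := Real.log_le_sub_one_of_pos (by positivity : (0:ℝ) < t⁻¹)
    rw [Real.log_inv] at h2
    have h3 : t⁻¹ - 1 = (1 - t)/t := by field_simp
    rw [h3] at h2
    have h4 : (1 - t)/t ≤ 2 * (1 - t) := by
      rw [div_le_iff₀ ht0]
      nlinarith
    linarith

lemma sqrt_inv_eq {t : ℝ} (ht : 0 ≤ t) : (Real.sqrt t)⁻¹ = t ^ (-(1/2) : ℝ) := by
  rw [Real.sqrt_eq_rpow, ← Real.rpow_neg ht]


lemma G_nonneg (t : ℝ) : 0 ≤ Gfun t := by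
  unfold Gfun
  have h1 : 0 ≤ Real.sqrt t := Real.sqrt_nonneg t
  positivity

lemma G_le_H (t : ℝ) (ht : 0 < t) : Gfun t ≤ Hfun t := by
  have hH1 : (0:ℝ) ≤ 256 * (Real.exp (-t) * t ^ (-(3/4) : ℝ)) := by positivity
  have hH2 : (0:ℝ) ≤ 6 * Real.exp (-t) := by positivity
  have hH3 : (0:ℝ) ≤ Real.exp (-t) * t ^ (2 : ℝ) := by positivity
  rcases eq_or_ne t 1 with rfl | hne
  · simp [Gfun, Real.log_one, Hfun]
    positivity
  rcases le_or_gt t (1/2) with hc1 | hc1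
  · -- t ∈ (0, 1/2]
    have hD : (1:ℝ)/2 ≤ |t - 1| := by
      rw [abs_of_neg (by linarith)]; linarith
    have hS : Real.sqrt t + (Real.sqrt t)⁻¹ ≤ 2 * t ^ (-(1/2) : ℝ) := by
      have h1 : Real.sqrt t ≤ 1 := sqrt_le_one.mpr (by linarith)
      have h2 : (1:ℝ) ≤ t ^ (-(1/2) : ℝ) :=
        Real.one_le_rpow_of_pos_of_le_one_of_nonpos ht (by linarith) (by norm_num)
      rw [sqrt_inv_eq ht.le]
      linarith
    have hL : (Real.log t)^2 ≤ 64 * t ^ (-(1/4) : ℝ) := log_sq_le t ht (by linarith)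
    have hnum : Real.exp (-t) * (Real.log t)^2 * (Real.sqrt t + (Real.sqrt t)⁻¹)
        ≤ 128 * (Real.exp (-t) * t ^ (-(3/4) : ℝ)) := by
      have hs0 : 0 ≤ Real.sqrt t + (Real.sqrt t)⁻¹ := by positivity
      have := mul_le_mul (mul_le_mul_of_nonneg_left hL (Real.exp_pos (-t)).le) hS hs0
        (by positivity : (0:ℝ) ≤ Real.exp (-t) * (64 * t ^ (-(1/4) : ℝ)))
      calc Real.exp (-t) * (Real.log t)^2 * (Real.sqrt t + (Real.sqrt t)⁻¹)
          ≤ Real.exp (-t) * (64 * t ^ (-(1/4) : ℝ)) * (2 * t ^ (-(1/2) : ℝ)) := this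
        _ = 128 * (Real.exp (-t) * (t ^ (-(1/4) : ℝ) * t ^ (-(1/2) : ℝ))) := by ring
        _ = 128 * (Real.exp (-t) * t ^ (-(3/4) : ℝ)) := by
            rw [← Real.rpow_add ht]; norm_num
    have : Gfun t ≤ 128 * (Real.exp (-t) * t ^ (-(3/4) : ℝ)) / (1/2) := by
      unfold Gfun
      apply div_le_div₀ (by positivity) hnum (by norm_num) hD
    unfold Hfun
    calc Gfun t ≤ 128 * (Real.exp (-t) * t ^ (-(3/4) : ℝ)) / (1/2) := this
      _ = 256 * (Real.exp (-t) * t ^ (-(3/4) : ℝ)) := by ring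
      _ ≤ _ := by linarith
  rcases lt_or_ge t 1 with hc2 | hc2
  · -- t ∈ (1/2, 1)
    have hD : 0 < |t - 1| := by rw [abs_of_neg (by linarith)]; linarith
    have hDle : |t - 1| ≤ 1/2 := by rw [abs_of_neg (by linarith)]; linarith
    have hL : (Real.log t)^2 ≤ 4 * |t-1|^2 := by
      have := abs_log_le_two t hc1.le
      have h0 : 0 ≤ |Real.log t| := abs_nonneg _
      nlinarith [sq_abs (Real.log t), sq_abs (t-1)]
    have hS : Real.sqrt t + (Real.sqrt t)⁻¹ ≤ 3 := by
      have h1 : Real.sqrt t ≤ 1 := sqrt_le_one.mpr (by linarith)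
      have h2 : (1:ℝ)/2 ≤ Real.sqrt t := by
        rw [show (1:ℝ)/2 = Real.sqrt (1/4) by
          rw [show (1:ℝ)/4 = (1/2)^2 by norm_num, Real.sqrt_sq (by norm_num)]]
        exact Real.sqrt_le_sqrt (by linarith)
      have h3 : (Real.sqrt t)⁻¹ ≤ 2 := by
        rw [inv_le_comm₀ (by linarith) (by norm_num)]
        linarith
      linarith
    have key : (Real.log t)^2 * (Real.sqrt t + (Real.sqrt t)⁻¹) ≤ 6 * |t - 1| := by
      have hs0 : 0 ≤ Real.sqrt t + (Real.sqrt t)⁻¹ := by positivity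
      calc (Real.log t)^2 * (Real.sqrt t + (Real.sqrt t)⁻¹)
          ≤ (4 * |t-1|^2) * 3 := mul_le_mul hL hS hs0 (by positivity)
        _ ≤ 6 * |t - 1| := by nlinarith [abs_nonneg (t-1)]
    have : Gfun t ≤ 6 * Real.exp (-t) := by
      unfold Gfun
      rw [div_le_iff₀ hD]
      calc Real.exp (-t) * (Real.log t)^2 * (Real.sqrt t + (Real.sqrt t)⁻¹)
          = Real.exp (-t) * ((Real.log t)^2 * (Real.sqrt t + (Real.sqrt t)⁻¹)) := by ring
        _ ≤ Real.exp (-t) * (6 * |t - 1|) :=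
            mul_le_mul_of_nonneg_left key (Real.exp_pos _).le
        _ = 6 * Real.exp (-t) * |t - 1| := by ring
    unfold Hfun; linarith
  · -- t > 1 (t ≠ 1)
    have ht1 : 1 < t := lt_of_le_of_ne hc2 (Ne.symm hne)
    have hD : 0 < |t - 1| := by rw [abs_of_pos (by linarith)]; linarith
    have hL : (Real.log t)^2 ≤ (t-1)^2 := by
      have h1 : Real.log t ≤ t - 1 := by
        have := Real.log_le_sub_one_of_pos (by linarith : (0:ℝ) < t); linarith
      have h2 : 0 ≤ Real.log t := Real.log_nonneg ht1.le
      nlinarith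
    have hS : Real.sqrt t + (Real.sqrt t)⁻¹ ≤ t + 1 := by
      have h2 : (1:ℝ) ≤ Real.sqrt t := by
        rw [show (1:ℝ) = Real.sqrt 1 by simp]
        exact Real.sqrt_le_sqrt ht1.le
      have h1 : Real.sqrt t ≤ t := by
        nlinarith [Real.sq_sqrt ht.le, Real.sqrt_nonneg t]
      have h3 : (Real.sqrt t)⁻¹ ≤ 1 := by
        rw [inv_le_comm₀ (by linarith) (by norm_num)]; linarith
      linarith
    have key : (Real.log t)^2 * (Real.sqrt t + (Real.sqrt t)⁻¹) ≤ t^2 * |t-1| := by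
      have hs0 : 0 ≤ Real.sqrt t + (Real.sqrt t)⁻¹ := by positivity
      calc (Real.log t)^2 * (Real.sqrt t + (Real.sqrt t)⁻¹)
          ≤ (t-1)^2 * (t+1) := mul_le_mul hL hS hs0 (by positivity)
        _ ≤ t^2 * |t-1| := by
            rw [abs_of_pos (by linarith)]
            nlinarith
    have : Gfun t ≤ Real.exp (-t) * t ^ (2:ℝ) := by
      unfold Gfun
      rw [div_le_iff₀ hD, Real.rpow_two]
      calc Real.exp (-t) * (Real.log t)^2 * (Real.sqrt t + (Real.sqrt t)⁻¹)
          = Real.exp (-t) * ((Real.log t)^2 * (Real.sqrt t + (Real.sqrt t)⁻¹)) := by ring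
        _ ≤ Real.exp (-t) * (t^2 * |t-1|) :=
            mul_le_mul_of_nonneg_left key (Real.exp_pos _).le
        _ = Real.exp (-t) * t^2 * |t-1| := by ring
    unfold Hfun; linarith

lemma meas_sqrt : Measurable Real.sqrt := Real.continuous_sqrt.measurable

lemma meas_G : Measurable Gfun := by
  unfold Gfun
  exact (((Real.measurable_exp.comp measurable_neg).mul
      ((Real.measurable_log).pow_const 2)).mul
      (meas_sqrt.add meas_sqrt.inv)).div ((measurable_id.sub measurable_const).abs)

lemma integrable_G : IntegrableOn Gfun (Ioi (0:ℝ)) := by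
  refine integrable_H.mono' (meas_G.aestronglyMeasurable) ?_
  refine (ae_restrict_iff' measurableSet_Ioi).2 (ae_of_all _ (fun t ht => ?_))
  rw [Real.norm_eq_abs, abs_of_nonneg (G_nonneg t)]
  exact G_le_H t ht

lemma meas_a : Measurable (fun t : ℝ => Real.exp (-t) * Real.log t / (t - 1)) :=
  ((Real.measurable_exp.comp measurable_neg).mul Real.measurable_log).div
    (measurable_id.sub measurable_const)

lemma a_abs_le_H (t : ℝ) (ht : 0 < t) :
    |Real.exp (-t) * Real.log t / (t - 1)| ≤ Hfun t := by
  have hH1 : (0:ℝ) ≤ 256 * (Real.exp (-t) * t ^ (-(3/4) : ℝ)) := by positivity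
  have hH2 : (0:ℝ) ≤ 6 * Real.exp (-t) := by positivity
  have hH3 : (0:ℝ) ≤ Real.exp (-t) * t ^ (2 : ℝ) := by positivity
  rw [abs_div, abs_mul, abs_of_nonneg (Real.exp_pos (-t)).le]
  rcases eq_or_ne t 1 with rfl | hne
  · simp [Hfun]; positivity
  have hD : 0 < |t - 1| := abs_pos.2 (sub_ne_zero.2 hne)
  rcases le_or_gt t (1/2) with hc1 | hc1
  · have hDl : (1:ℝ)/2 ≤ |t - 1| := by rw [abs_of_neg (by linarith)]; linarith
    have hlog : |Real.log t| ≤ 8 * t ^ (-(3/4) : ℝ) := by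
      have h1 : -Real.log t ≤ 8 * t ^ (-(1/8) : ℝ) := neg_log_le t ht
      have h0 : Real.log t ≤ 0 := Real.log_nonpos ht.le (by linarith)
      have h2 : t ^ (-(1/8) : ℝ) ≤ t ^ (-(3/4) : ℝ) :=
        Real.rpow_le_rpow_of_exponent_ge ht (by linarith) (by norm_num)
      rw [abs_of_nonpos h0]
      linarith
    calc Real.exp (-t) * |Real.log t| / |t - 1|
        ≤ Real.exp (-t) * (8 * t ^ (-(3/4) : ℝ)) / (1/2) := by
          apply div_le_div₀ (by positivity)
            (mul_le_mul_of_nonneg_left hlog (Real.exp_pos _).le) (by norm_num) hDl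
      _ = 16 * (Real.exp (-t) * t ^ (-(3/4) : ℝ)) := by ring
      _ ≤ Hfun t := by unfold Hfun; nlinarith [hH1]
  · have hlog : |Real.log t| ≤ 2 * |t - 1| := abs_log_le_two t hc1.le
    calc Real.exp (-t) * |Real.log t| / |t - 1|
        ≤ Real.exp (-t) * (2 * |t - 1|) / |t - 1| := by
          apply div_le_div_of_nonneg_right ?_ (abs_nonneg (t-1))
          exact mul_le_mul_of_nonneg_left hlog (Real.exp_pos _).le
      _ = 2 * Real.exp (-t) := by field_simp
      _ ≤ Hfun t := by unfold Hfun; linarith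

lemma integrable_a : IntegrableOn (fun t : ℝ => Real.exp (-t) * Real.log t / (t - 1)) (Ioi 0) := by
  refine integrable_H.mono' (meas_a.aestronglyMeasurable) ?_
  refine (ae_restrict_iff' measurableSet_Ioi).2 (ae_of_all _ (fun t ht => ?_))
  rw [Real.norm_eq_abs]
  exact a_abs_le_H t ht

lemma c_abs_le_G (t : ℝ) (ht : 0 < t) :
    |Real.exp (-t) * (Real.log t)^2 / (t - 1)| ≤ Gfun t := by
  have hs : 1 ≤ Real.sqrt t + (Real.sqrt t)⁻¹ := by
    have h0 : 0 < Real.sqrt t := Real.sqrt_pos.2 ht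
    nlinarith [mul_inv_cancel₀ (ne_of_gt h0), sq_nonneg (Real.sqrt t - 1)]
  unfold Gfun
  rw [abs_div, abs_mul, abs_of_nonneg (Real.exp_pos (-t)).le, abs_of_nonneg (sq_nonneg _)]
  apply div_le_div_of_nonneg_right ?_ (abs_nonneg (t-1))
  have hnum : 0 ≤ Real.exp (-t) * (Real.log t)^2 := by positivity
  nlinarith [mul_le_mul_of_nonneg_left hs hnum]

lemma meas_c : Measurable (fun t : ℝ => Real.exp (-t) * (Real.log t)^2 / (t - 1)) :=
  ((Real.measurable_exp.comp measurable_neg).mul (Real.measurable_log.pow_const 2)).div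
    (measurable_id.sub measurable_const)

lemma integrable_c :
    IntegrableOn (fun t : ℝ => Real.exp (-t) * (Real.log t)^2 / (t - 1)) (Ioi 0) := by
  refine integrable_G.mono' (meas_c.aestronglyMeasurable) ?_
  refine (ae_restrict_iff' measurableSet_Ioi).2 (ae_of_all _ (fun t ht => ?_))
  rw [Real.norm_eq_abs]
  exact c_abs_le_G t ht

lemma integrable_exp_neg : IntegrableOn (fun t : ℝ => Real.exp (-t)) (Ioi 0) := by
  refine IntegrableOn.congr_fun (Real.GammaIntegral_convergent (by norm_num : (0:ℝ) < 1))
    (fun t ht => ?_) measurableSet_Ioi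
  rw [show (1:ℝ) - 1 = 0 by norm_num, Real.rpow_zero, mul_one]

lemma ratio_nonneg (t x : ℝ) (ht : 0 < t) (hx : 0 ≤ x) (hx1 : x ≤ 1) :
    0 ≤ (t ^ x - 1) / (t - 1) ∧ (t ^ x - 1) / (t - 1) ≤ 1 := by
  rcases lt_trichotomy t 1 with h1 | h1 | h1
  · have ha : t ≤ t ^ x := by
      calc t = t ^ (1:ℝ) := (Real.rpow_one t).symm
        _ ≤ t ^ x := Real.rpow_le_rpow_of_exponent_ge ht h1.le hx1
    have hb : t ^ x ≤ 1 := by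
      calc t ^ x ≤ t ^ (0:ℝ) := Real.rpow_le_rpow_of_exponent_ge ht h1.le hx
        _ = 1 := Real.rpow_zero t
    rw [show (t ^ x - 1) / (t - 1) = (1 - t ^ x) / (1 - t) by
      rw [← neg_div_neg_eq]; ring_nf]
    constructor
    · exact div_nonneg (by linarith) (by linarith)
    · rw [div_le_one (by linarith)]; linarith
  · subst h1; simp
  · have ha : (1:ℝ) ≤ t ^ x := by
      calc (1:ℝ) = t ^ (0:ℝ) := (Real.rpow_zero t).symm
        _ ≤ t ^ x := Real.rpow_le_rpow_of_exponent_le h1.le hx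
    have hb : t ^ x ≤ t := by
      calc t ^ x ≤ t ^ (1:ℝ) := Real.rpow_le_rpow_of_exponent_le h1.le hx1
        _ = t := Real.rpow_one t
    constructor
    · exact div_nonneg (by linarith) (by linarith)
    · rw [div_le_one (by linarith)]; linarith

lemma meas_b (x : ℝ) : Measurable (fun t : ℝ => Real.exp (-t) * (t ^ x - 1) / (t - 1)) :=
  ((Real.measurable_exp.comp measurable_neg).mul
    ((measurable_id'.pow_const x).sub measurable_const)).div
    (measurable_id.sub measurable_const)

lemma integrable_b (x : ℝ) (hx : 0 ≤ x) (hx1 : x ≤ 1) :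
    IntegrableOn (fun t : ℝ => Real.exp (-t) * (t ^ x - 1) / (t - 1)) (Ioi 0) := by
  refine integrable_exp_neg.mono' ((meas_b x).aestronglyMeasurable) ?_
  refine (ae_restrict_iff' measurableSet_Ioi).2 (ae_of_all _ (fun t ht => ?_))
  rw [Real.norm_eq_abs, mul_div_assoc, abs_mul, abs_of_nonneg (Real.exp_pos (-t)).le]
  obtain ⟨h0, h1⟩ := ratio_nonneg t x ht hx hx1
  rw [abs_of_nonneg h0]
  nlinarith [Real.exp_pos (-t)]

lemma expquad (u : ℝ) :
    Tendsto (fun x : ℝ => (Real.exp (x*u) - 1 - x*u)/x^2) (nhdsWithin 0 (Ioi 0))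
      (nhds (u^2/2)) := by
  have key : Tendsto (fun x : ℝ => (Real.exp (x*u) - 1 - x*u)/x^2 - u^2/2)
      (nhdsWithin 0 (Ioi 0)) (nhds 0) := by
    apply squeeze_zero_norm' (a := fun x : ℝ => |u|^3 * x)
    · have hmem : Ioo (0:ℝ) (1/(|u|+1)) ∈ nhdsWithin 0 (Ioi 0) :=
        Ioo_mem_nhdsGT_of_mem (by constructor <;> [rfl; positivity])
      filter_upwards [hmem] with x hx
      have hx0 : 0 < x := hx.1
      have hxu : |x*u| ≤ 1 := by
        rw [abs_mul, abs_of_pos hx0]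
        have h2 : x * |u| ≤ (1/(|u|+1)) * |u| :=
          mul_le_mul_of_nonneg_right hx.2.le (abs_nonneg u)
        have h3 : (1/(|u|+1)) * |u| ≤ 1 := by
          rw [div_mul_eq_mul_div, div_le_one (by positivity)]
          linarith [abs_nonneg u]
        linarith
      have hb := Real.exp_bound hxu (by norm_num : 0 < 3)
      have hsum : ∑ m ∈ Finset.range 3, (x*u)^m / m.factorial
          = 1 + x*u + (x*u)^2/2 := by
        norm_num [Finset.sum_range_succ]
      rw [hsum] at hb
      have hb2 : |Real.exp (x*u) - 1 - x*u - (x*u)^2/2| ≤ |x*u|^3 := by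
        have : ((3:ℕ).succ : ℝ) / ((3:ℕ).factorial * 3) ≤ 1 := by norm_num [Nat.factorial]
        calc |Real.exp (x*u) - 1 - x*u - (x*u)^2/2|
            = |Real.exp (x*u) - (1 + x*u + (x*u)^2/2)| := by ring_nf
          _ ≤ |x*u|^3 * (((3:ℕ).succ : ℝ) / ((3:ℕ).factorial * 3)) := hb
          _ ≤ |x*u|^3 := by
              nlinarith [pow_nonneg (abs_nonneg (x*u)) 3]
      rw [Real.norm_eq_abs]
      have hdiv : (Real.exp (x*u) - 1 - x*u)/x^2 - u^2/2
          = (Real.exp (x*u) - 1 - x*u - (x*u)^2/2) / x^2 := by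
        field_simp
      rw [hdiv, abs_div, abs_of_nonneg (sq_nonneg x)]
      rw [div_le_iff₀ (by positivity)]
      calc |Real.exp (x*u) - 1 - x*u - (x*u)^2/2| ≤ |x*u|^3 := hb2
        _ = |u|^3 * x^2 * x := by
            rw [abs_mul, abs_of_pos hx0]; ring
        _ = |u|^3 * x * x^2 := by ring
    · have : Tendsto (fun x : ℝ => |u|^3 * x) (nhds 0) (nhds 0) :=
        (continuous_const.mul continuous_id).tendsto' 0 0 (by simp)
      exact this.mono_left nhdsWithin_le_nhds
  have := key.add (tendsto_const_nhds (x := u^2/2) (f := nhdsWithin (0:ℝ) (Ioi 0)))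
  simpa using this

noncomputable def Ffun (x t : ℝ) : ℝ :=
  (Real.exp (-t) * Real.log t / (t - 1) * x - Real.exp (-t) * (t ^ x - 1) / (t - 1)) / x ^ 2

noncomputable def flim (t : ℝ) : ℝ :=
  Real.exp (-t) * (Real.log t)^2 / (t - 1) * (-(1/2))

lemma Ffun_eq (x t : ℝ) (hx : x ≠ 0) (ht : 0 < t) :
    Ffun x t = -(Real.exp (-t)/(t-1) *
      ((Real.exp (x * Real.log t) - 1 - x * Real.log t)/x^2)) := by
  unfold Ffun
  rw [Real.rpow_def_of_pos ht]
  rcases eq_or_ne t 1 with rfl | hne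
  · simp
  have h1 : t - 1 ≠ 0 := sub_ne_zero.2 hne
  rw [mul_comm (Real.log t) x]
  field_simp
  ring

lemma F_tendsto (t : ℝ) (ht : 0 < t) (hne : t ≠ 1) :
    Tendsto (fun x => Ffun x t) (nhdsWithin 0 (Ioi 0)) (nhds (flim t)) := by
  have h1 : t - 1 ≠ 0 := sub_ne_zero.2 hne
  have hmain : Tendsto (fun x : ℝ => -(Real.exp (-t)/(t-1) *
      ((Real.exp (x * Real.log t) - 1 - x * Real.log t)/x^2)))
      (nhdsWithin 0 (Ioi 0)) (nhds (-(Real.exp (-t)/(t-1) * ((Real.log t)^2/2)))) :=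
    ((expquad (Real.log t)).const_mul (Real.exp (-t)/(t-1))).neg
  have heq : -(Real.exp (-t)/(t-1) * ((Real.log t)^2/2)) = flim t := by
    unfold flim; field_simp
  rw [heq] at hmain
  refine hmain.congr' ?_
  filter_upwards [self_mem_nhdsWithin] with x hx
  exact (Ffun_eq x t (ne_of_gt hx) ht).symm

lemma F_bound (x t : ℝ) (hx : 0 < x) (hx2 : x ≤ 1/2) (ht : 0 < t) (hne : t ≠ 1) :
    |Ffun x t| ≤ Gfun t := by
  set u := Real.log t with hu
  have h1 : t - 1 ≠ 0 := sub_ne_zero.2 hne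
  have hD : 0 < |t - 1| := abs_pos.2 h1
  rw [Ffun_eq x t (ne_of_gt hx) ht, abs_neg, abs_mul, abs_div, abs_div,
    abs_of_nonneg (Real.exp_pos (-t)).le, abs_of_nonneg (sq_nonneg x)]
  have key : |Real.exp (x*u) - 1 - x*u| ≤ x^2 * (u^2 * Real.exp (|u|/2)) := by
    calc |Real.exp (x*u) - 1 - x*u| ≤ (x*u)^2 * Real.exp |x*u| := exp_taylor2_bound (x*u)
      _ ≤ (x*u)^2 * Real.exp (|u|/2) := by
          apply mul_le_mul_of_nonneg_left _ (sq_nonneg _)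
          apply Real.exp_le_exp.2
          rw [abs_mul, abs_of_pos hx]
          nlinarith [abs_nonneg u]
      _ = x^2 * (u^2 * Real.exp (|u|/2)) := by ring
  have hexps : Real.exp (|u|/2) ≤ Real.sqrt t + (Real.sqrt t)⁻¹ := by
    rcases le_or_gt 1 t with h2 | h2
    · have : |u| = Real.log t := abs_of_nonneg (Real.log_nonneg h2)
      rw [this, show Real.log t / 2 = Real.log t * (1/2) by ring,
        ← Real.rpow_def_of_pos ht, ← Real.sqrt_eq_rpow]
      have : 0 ≤ (Real.sqrt t)⁻¹ := by positivity
      linarith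
    · have : |u| = -Real.log t := abs_of_nonpos (Real.log_nonpos ht.le h2.le)
      rw [this, show -Real.log t / 2 = Real.log t * (-(1/2)) by ring,
        ← Real.rpow_def_of_pos ht, ← sqrt_inv_eq ht.le]
      have : 0 ≤ Real.sqrt t := Real.sqrt_nonneg t
      linarith
  have hstep : |Real.exp (x*u) - 1 - x*u| / x^2 ≤ u^2 * Real.exp (|u|/2) := by
    rw [div_le_iff₀ (by positivity)]
    calc |Real.exp (x*u) - 1 - x*u| ≤ x^2 * (u^2 * Real.exp (|u|/2)) := key
      _ = u^2 * Real.exp (|u|/2) * x^2 := by ring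
  unfold Gfun
  calc Real.exp (-t) / |t-1| * (|Real.exp (x*u) - 1 - x*u| / x^2)
      ≤ Real.exp (-t) / |t-1| * (u^2 * Real.exp (|u|/2)) := by
        apply mul_le_mul_of_nonneg_left hstep (by positivity)
    _ = Real.exp (-t) * u^2 * Real.exp (|u|/2) / |t-1| := by ring
    _ ≤ Real.exp (-t) * u^2 * (Real.sqrt t + (Real.sqrt t)⁻¹) / |t-1| := by
        apply div_le_div_of_nonneg_right ?_ (abs_nonneg (t-1))
        apply mul_le_mul_of_nonneg_left hexps (by positivity)
    _ = Real.exp (-t) * (Real.log t)^2 * (Real.sqrt t + (Real.sqrt t)⁻¹) / |t-1| := by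
        rw [hu]

lemma meas_F (x : ℝ) : Measurable (Ffun x) := by
  unfold Ffun
  exact ((meas_a.mul_const x).sub (meas_b x)).div_const _

lemma ae_ne_one : ∀ᵐ t ∂(volume.restrict (Ioi (0:ℝ))), t ≠ (1:ℝ) := by
  refine ae_restrict_of_ae ?_
  refine (ae_iff).2 ?_
  have h : {a : ℝ | ¬ a ≠ 1} = {1} := by ext a; simp
  rw [h]
  exact measure_singleton 1

lemma limit_half :
    Tendsto (fun x : ℝ => ∫ t in Ioi (0:ℝ), Ffun x t) (nhdsWithin 0 (Ioi 0))
      (nhds (∫ t in Ioi (0:ℝ), flim t)) := by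
  refine tendsto_integral_filter_of_dominated_convergence Gfun ?_ ?_ integrable_G ?_
  · exact Eventually.of_forall (fun x => (meas_F x).aestronglyMeasurable)
  · filter_upwards [Ioo_mem_nhdsGT_of_mem (show (0:ℝ) ∈ Ico (0:ℝ) (1/2) by norm_num)]
      with x hx
    filter_upwards [ae_restrict_mem measurableSet_Ioi, ae_ne_one] with t ht htne
    rw [Real.norm_eq_abs]
    exact F_bound x t hx.1 hx.2.le ht htne
  · filter_upwards [ae_restrict_mem measurableSet_Ioi, ae_ne_one] with t ht htne
    exact F_tendsto t ht htne

lemma outer_eq : ∀ᶠ x in nhdsWithin (0:ℝ) (Ioi 0),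
    (kurepaDerivZero * x - kurepa x)/x^2 = ∫ t in Ioi (0:ℝ), Ffun x t := by
  filter_upwards [Ioo_mem_nhdsGT_of_mem (show (0:ℝ) ∈ Ico (0:ℝ) 1 by norm_num)]
    with x hx
  unfold kurepa kurepaDerivZero Ffun
  rw [← integral_mul_const,
    ← integral_sub (integrable_a.mul_const x) (integrable_b x hx.1.le hx.2.le),
    ← integral_div]

lemma integral_flim : ∫ t in Ioi (0:ℝ), flim t
    = -(1/2) * ∫ t in Ioi (0:ℝ), Real.exp (-t) * (Real.log t)^2 / (t - 1) := by
  unfold flim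
  rw [integral_mul_const]
  ring

lemma first_half :
    Tendsto (fun x : ℝ => (kurepaDerivZero * x - kurepa x) / x ^ 2)
      (nhdsWithin 0 (Ioi 0))
      (nhds (-(1 / 2) * ∫ t in Ioi (0 : ℝ),
        Real.exp (-t) * (Real.log t) ^ 2 / (t - 1))) := by
  rw [← integral_flim]
  exact limit_half.congr' (outer_eq.mono fun x hx => hx.symm)

noncomputable def cfun (t : ℝ) : ℝ := Real.exp (-t) * (Real.log t)^2 / (t - 1)

lemma cfun_nonpos (t : ℝ) (ht : 0 < t) (ht1 : t ≤ 1) : cfun t ≤ 0 := by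
  unfold cfun
  apply div_nonpos_of_nonneg_of_nonpos (by positivity) (by linarith)

lemma integral_cfun_nonpos (s : Set ℝ) (hs : MeasurableSet s) (hsub : s ⊆ Ioc 0 1) :
    ∫ t in s, cfun t ≤ 0 := by
  apply integral_nonpos_of_ae
  refine (ae_restrict_iff' hs).2 (ae_of_all _ (fun t ht => ?_))
  exact cfun_nonpos t (hsub ht).1 (hsub ht).2

lemma c_le_shell (a t : ℝ) (ha : 1 ≤ a) (ht0 : 0 < t) (ht2 : t ≤ Real.exp (-a)) :
    cfun t ≤ -((1 - Real.exp (-1)) * a^2) := by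
  have hte : t ≤ Real.exp (-1) := ht2.trans (Real.exp_le_exp.2 (by linarith))
  have h3 : Real.exp (-1) < 1 := by
    rw [show (1:ℝ) = Real.exp 0 by simp]
    exact Real.exp_lt_exp.2 (by norm_num)
  have ht1 : t < 1 := lt_of_le_of_lt hte h3
  have hlog : Real.log t ≤ -a := by
    calc Real.log t ≤ Real.log (Real.exp (-a)) := Real.log_le_log ht0 ht2
      _ = -a := Real.log_exp _
  have hL : a^2 ≤ (Real.log t)^2 := by nlinarith
  have hexp : 1 - Real.exp (-1) ≤ Real.exp (-t) := by
    have := Real.add_one_le_exp (-t)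
    linarith
  have hy : 0 ≤ 1 - Real.exp (-1) := by linarith
  have hnum : (1 - Real.exp (-1)) * a^2 ≤ Real.exp (-t) * (Real.log t)^2 :=
    mul_le_mul hexp hL (by positivity) (Real.exp_pos _).le
  unfold cfun
  rw [div_le_iff_of_neg (by linarith : t - 1 < 0)]
  nlinarith [mul_nonneg (mul_nonneg hy (sq_nonneg a)) ht0.le]

lemma shell_bound (a b : ℝ) (ha : 1 ≤ a) (hab : a ≤ b) :
    ∫ t in Ioc (Real.exp (-b)) (Real.exp (-a)), cfun t
      ≤ (Real.exp (-a) - Real.exp (-b)) * (-((1 - Real.exp (-1)) * a^2)) := by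
  have hpq : Real.exp (-b) ≤ Real.exp (-a) := Real.exp_le_exp.2 (by linarith)
  have hsub : Ioc (Real.exp (-b)) (Real.exp (-a)) ⊆ Ioi (0:ℝ) := fun t ht =>
    lt_trans (Real.exp_pos _) ht.1
  have hint : IntegrableOn cfun (Ioc (Real.exp (-b)) (Real.exp (-a))) :=
    integrable_c.mono_set hsub
  have hintc : IntegrableOn (fun _ : ℝ => -((1 - Real.exp (-1)) * a^2))
      (Ioc (Real.exp (-b)) (Real.exp (-a))) := integrableOn_const measure_Ioc_lt_top.ne
  calc ∫ t in Ioc (Real.exp (-b)) (Real.exp (-a)), cfun t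
      ≤ ∫ _ in Ioc (Real.exp (-b)) (Real.exp (-a)), -((1 - Real.exp (-1)) * a^2) := by
        refine setIntegral_mono_on hint hintc measurableSet_Ioc (fun t ht => ?_)
        exact c_le_shell a t ha (hsub ht) ht.2
    _ = (Real.exp (-a) - Real.exp (-b)) * (-((1 - Real.exp (-1)) * a^2)) := by
        rw [setIntegral_const, Real.volume_real_Ioc_of_le hpq, smul_eq_mul]

lemma right_piece : ∫ t in Ioi (1:ℝ), cfun t ≤ Real.exp (-1) := by
  have hint : IntegrableOn cfun (Ioi 1) :=
    integrable_c.mono_set (fun t ht => mem_Ioi.2 (lt_trans one_pos ht))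
  have hg : IntegrableOn (fun t : ℝ => (t - 1) * Real.exp (-t)) (Ioi 1) := by
    refine (integrable_H.mono_set (fun t (ht : t ∈ Ioi (1:ℝ)) => mem_Ioi.2 (lt_trans one_pos ht))).mono'
      (((measurable_id.sub measurable_const).mul
        (Real.measurable_exp.comp measurable_neg)).aestronglyMeasurable) ?_
    refine (ae_restrict_iff' measurableSet_Ioi).2 (ae_of_all _ (fun t ht => ?_))
    have ht1 : (1:ℝ) < t := ht
    rw [Real.norm_eq_abs, abs_mul, abs_of_nonneg (by linarith : (0:ℝ) ≤ t - 1),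
      abs_of_nonneg (Real.exp_pos (-t)).le]
    unfold Hfun
    have h2 : (t-1) * Real.exp (-t) ≤ Real.exp (-t) * t^(2:ℝ) := by
      rw [Real.rpow_two]
      have h3 : t - 1 ≤ t^2 := by nlinarith
      nlinarith [mul_le_mul_of_nonneg_right h3 (Real.exp_pos (-t)).le]
    nlinarith [Real.exp_pos (-t), Real.rpow_natCast t 2,
      mul_pos (Real.exp_pos (-t)) (Real.rpow_pos_of_pos (lt_trans one_pos ht1) (-(3/4):ℝ))]
  have hval : ∫ t in Ioi (1:ℝ), (t - 1) * Real.exp (-t) = Real.exp (-1) := by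
    have hderiv : ∀ t ∈ Ioi (1:ℝ), HasDerivAt (fun s : ℝ => -s * Real.exp (-s))
        ((t - 1) * Real.exp (-t)) t := by
      intro t _
      have h1 : HasDerivAt (fun s : ℝ => Real.exp (-s)) (-Real.exp (-t)) t := by
        simpa [Function.comp_def] using (Real.hasDerivAt_exp (-t)).comp t ((hasDerivAt_id t).neg)
      have h2 := ((hasDerivAt_id t).neg.mul h1)
      refine h2.congr_deriv ?_
      show -1 * Real.exp (-t) + -t * -Real.exp (-t) = (t - 1) * Real.exp (-t)
      ring
    have hcont : ContinuousWithinAt (fun s : ℝ => -s * Real.exp (-s)) (Ici 1) 1 :=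
      (Continuous.continuousWithinAt (by continuity))
    have htop : Tendsto (fun s : ℝ => -s * Real.exp (-s)) atTop (nhds 0) := by
      have := tendsto_pow_mul_exp_neg_atTop_nhds_zero 1
      simp only [pow_one] at this
      simpa using this.neg
    have := integral_Ioi_of_hasDerivAt_of_tendsto hcont hderiv hg htop
    rw [this]
    simp [Real.exp_neg]
  calc ∫ t in Ioi (1:ℝ), cfun t ≤ ∫ t in Ioi (1:ℝ), (t - 1) * Real.exp (-t) := by
        refine setIntegral_mono_on hint hg measurableSet_Ioi (fun t ht => ?_)
        have ht1 : (1:ℝ) < t := ht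
        have hlog : Real.log t ≤ t - 1 := by
          have := Real.log_le_sub_one_of_pos (by linarith : (0:ℝ) < t)
          linarith
        have hlog0 : 0 ≤ Real.log t := Real.log_nonneg ht1.le
        unfold cfun
        rw [div_le_iff₀ (by linarith : (0:ℝ) < t - 1)]
        have hL : (Real.log t)^2 ≤ (t-1)^2 := by nlinarith
        nlinarith [Real.exp_pos (-t)]
    _ = Real.exp (-1) := hval

lemma split_Ioc (a b c : ℝ) (ha : 0 < a) (h1 : a ≤ b) (h2 : b ≤ c) :
    ∫ t in Ioc a c, cfun t = (∫ t in Ioc a b, cfun t) + ∫ t in Ioc b c, cfun t := by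
  rw [← Set.Ioc_union_Ioc_eq_Ioc h1 h2]
  refine setIntegral_union (Set.Ioc_disjoint_Ioc_of_le le_rfl) measurableSet_Ioc ?_ ?_
  · exact integrable_c.mono_set (fun t ht => lt_trans ha ht.1)
  · exact integrable_c.mono_set (fun t ht => lt_trans (lt_of_lt_of_le ha h1) ht.1)

lemma split_Ioc' (b c : ℝ) (hb : 0 < b) (h2 : b ≤ c) :
    ∫ t in Ioc 0 c, cfun t = (∫ t in Ioc 0 b, cfun t) + ∫ t in Ioc b c, cfun t := by
  rw [← Set.Ioc_union_Ioc_eq_Ioc hb.le h2]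
  refine setIntegral_union (Set.Ioc_disjoint_Ioc_of_le le_rfl) measurableSet_Ioc ?_ ?_
  · exact integrable_c.mono_set (fun t ht => ht.1)
  · exact integrable_c.mono_set (fun t ht => lt_trans hb ht.1)

lemma exp_neg_bound : Real.exp (-1) ≤ 0.37 := by
  rw [Real.exp_neg, inv_le_comm₀ (Real.exp_pos 1) (by norm_num)]
  have := Real.exp_one_gt_d9
  norm_num
  linarith

lemma final_numeric (y L1 L2 L3 R N1 N2 : ℝ) (hy0 : 0 < y) (hy1 : y ≤ 0.37)
    (hS1 : L1 ≤ (y - y*y) * (-((1 - y) * 1^2)))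
    (hS2 : L2 ≤ (y*y - y*y*y) * (-((1 - y) * 2^2)))
    (hS3 : L3 ≤ (y*y*y - y*y*y*y) * (-((1 - y) * 3^2)))
    (hR : R ≤ y) (hN1 : N1 ≤ 0) (hN2 : N2 ≤ 0) :
    N1 + L3 + L2 + L1 + N2 + R < 0 := by
  have key : 0 < y*y*(2 + 2*y - 14*(y*y) + 9*(y*y*y)) := by
    have h1 : y*y ≤ 0.1369 := by nlinarith
    have h2 : 0 < 2 + 2*y - 14*(y*y) + 9*(y*y*y) := by
      nlinarith [mul_pos (mul_pos hy0 hy0) hy0]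
    positivity
  nlinarith [key]

lemma integral_cfun_neg : ∫ t in Ioi (0:ℝ), cfun t < 0 := by
  set y := Real.exp (-1) with hy
  have hy0 : 0 < y := Real.exp_pos _
  have hy1 : y ≤ 0.37 := exp_neg_bound
  have hq2 : Real.exp (-2:ℝ) = y * y := by rw [hy, ← Real.exp_add]; norm_num
  have hq3 : Real.exp (-3:ℝ) = y * y * y := by rw [hy, ← Real.exp_add, ← Real.exp_add]; norm_num
  have hq4 : Real.exp (-4:ℝ) = y * y * y * y := by
    rw [hy, ← Real.exp_add, ← Real.exp_add, ← Real.exp_add]; norm_num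
  have e21 : Real.exp (-2:ℝ) ≤ Real.exp (-1:ℝ) := Real.exp_le_exp.2 (by norm_num)
  have e32 : Real.exp (-3:ℝ) ≤ Real.exp (-2:ℝ) := Real.exp_le_exp.2 (by norm_num)
  have e43 : Real.exp (-4:ℝ) ≤ Real.exp (-3:ℝ) := Real.exp_le_exp.2 (by norm_num)
  have e11 : Real.exp (-1:ℝ) ≤ 1 := by
    rw [show (1:ℝ) = Real.exp 0 by simp]
    exact Real.exp_le_exp.2 (by norm_num)
  have hp1 : 0 < Real.exp (-1:ℝ) := Real.exp_pos _
  have hp2 : 0 < Real.exp (-2:ℝ) := Real.exp_pos _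
  have hp3 : 0 < Real.exp (-3:ℝ) := Real.exp_pos _
  have hp4 : 0 < Real.exp (-4:ℝ) := Real.exp_pos _
  -- split the whole integral
  have hsplit : ∫ t in Ioi (0:ℝ), cfun t
      = (∫ t in Ioc (0:ℝ) 1, cfun t) + ∫ t in Ioi (1:ℝ), cfun t := by
    rw [← Set.Ioc_union_Ioi_eq_Ioi (zero_le_one)]
    refine setIntegral_union (Set.Ioc_disjoint_Ioi le_rfl) measurableSet_Ioi ?_ ?_
    · exact integrable_c.mono_set (fun t ht => ht.1)
    · exact integrable_c.mono_set (fun t ht => mem_Ioi.2 (lt_trans one_pos ht))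
  -- split the left part into shells
  have hL1 : ∫ t in Ioc (0:ℝ) 1, cfun t
      = (∫ t in Ioc (0:ℝ) (Real.exp (-1)), cfun t) + ∫ t in Ioc (Real.exp (-1)) 1, cfun t :=
    split_Ioc' _ _ hp1 e11
  have hL2 : ∫ t in Ioc (0:ℝ) (Real.exp (-1)), cfun t
      = (∫ t in Ioc (0:ℝ) (Real.exp (-2)), cfun t)
        + ∫ t in Ioc (Real.exp (-2)) (Real.exp (-1)), cfun t :=
    split_Ioc' _ _ hp2 e21
  have hL3 : ∫ t in Ioc (0:ℝ) (Real.exp (-2)), cfun t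
      = (∫ t in Ioc (0:ℝ) (Real.exp (-3)), cfun t)
        + ∫ t in Ioc (Real.exp (-3)) (Real.exp (-2)), cfun t :=
    split_Ioc' _ _ hp3 e32
  have hL4 : ∫ t in Ioc (0:ℝ) (Real.exp (-3)), cfun t
      = (∫ t in Ioc (0:ℝ) (Real.exp (-4)), cfun t)
        + ∫ t in Ioc (Real.exp (-4)) (Real.exp (-3)), cfun t :=
    split_Ioc' _ _ hp4 e43
  -- nonpositive pieces
  have hN1 : ∫ t in Ioc (0:ℝ) (Real.exp (-4)), cfun t ≤ 0 :=
    integral_cfun_nonpos _ measurableSet_Ioc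
      (fun t ht => ⟨ht.1, ht.2.trans (by nlinarith)⟩)
  have hN2 : ∫ t in Ioc (Real.exp (-1)) 1, cfun t ≤ 0 :=
    integral_cfun_nonpos _ measurableSet_Ioc
      (fun t ht => ⟨lt_trans hp1 ht.1, ht.2⟩)
  -- shell bounds
  have hS1 := shell_bound 1 2 le_rfl (by norm_num)
  have hS2 := shell_bound 2 3 (by norm_num) (by norm_num)
  have hS3 := shell_bound 3 4 (by norm_num) (by norm_num)
  -- right piece
  have hR := right_piece
  -- numeric conclusion
  rw [hsplit, hL1, hL2, hL3, hL4]
  set L1 := ∫ t in Ioc (Real.exp (-2:ℝ)) (Real.exp (-1:ℝ)), cfun t with hL1d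
  set L2 := ∫ t in Ioc (Real.exp (-3:ℝ)) (Real.exp (-2:ℝ)), cfun t with hL2d
  set L3 := ∫ t in Ioc (Real.exp (-4:ℝ)) (Real.exp (-3:ℝ)), cfun t with hL3d
  set R := ∫ t in Ioi (1:ℝ), cfun t with hRd
  set N1 := ∫ t in Ioc (0:ℝ) (Real.exp (-4:ℝ)), cfun t with hN1d
  set N2 := ∫ t in Ioc (Real.exp (-1:ℝ)) 1, cfun t with hN2d
  rw [hq2] at hS1 hS2
  rw [hq3] at hS2 hS3
  rw [hq4] at hS3
  rw [← hy] at hS1 hS2 hS3 hR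
  exact final_numeric y L1 L2 L3 R N1 N2 hy0 hy1 hS1 hS2 hS3 hR hN1 hN2

end Aux

theorem kurepa_aux_limit :
    Tendsto (fun x : ℝ => (kurepaDerivZero * x - kurepa x) / x ^ 2)
        (nhdsWithin 0 (Set.Ioi 0))
        (nhds (-(1 / 2) * ∫ t in Set.Ioi (0 : ℝ),
          Real.exp (-t) * (Real.log t) ^ 2 / (t - 1))) ∧
    0 < -(1 / 2) * ∫ t in Set.Ioi (0 : ℝ),
          Real.exp (-t) * (Real.log t) ^ 2 / (t - 1) := by
  constructor
  · exact first_half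
  · have h := integral_cfun_neg
    unfold cfun at h
    linarith
end

section
/- For every real number x with 0 ≤ x ≤ 1, the inequalities 3x/(2 + √(1 − x²)) ≤ 6(√(1 + x) − √(1 − x))/(4 + √(1 + x) + √(1 − x)) ≤ arcsin x hold. -/
/-!
Put `θ = arcsin x`. The left-hand side is `cusa θ = 3 sin θ / (2 + cos θ)`, and since
`√(1 ± x) = cos (θ/2) ± sin (θ/2)` the middle term is `2 * cusa (θ/2)`. The first inequality
`cusa θ ≤ 2 * cusa (θ/2)` then reduces to `sin (θ/2) * (1 - cos (θ/2))² ≥ 0`, and the second one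
is Cusa's inequality `3 sin t ≤ t (2 + cos t)` at `t = θ/2`, proved by differentiating three times.
-/

open Real Set

lemma nonneg_of_hasDerivAt_of_nonneg_on_Ioo {f f' : ℝ → ℝ} {a t : ℝ}
    (hf : ∀ s, HasDerivAt f (f' s) s) (hf' : ∀ s ∈ Ioo 0 a, 0 ≤ f' s) (h0 : f 0 = 0)
    (ht : t ∈ Icc 0 a) : 0 ≤ f t := by
  have hmono : MonotoneOn f (Icc 0 a) :=
    monotoneOn_of_hasDerivWithinAt_nonneg (convex_Icc 0 a)
      (fun s _ ↦ (hf s).continuousAt.continuousWithinAt) (fun s _ ↦ (hf s).hasDerivWithinAt)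
      (by simpa only [interior_Icc] using hf')
  simpa only [h0] using hmono ⟨le_rfl, ht.1.trans ht.2⟩ ht ht.1

lemma sin_sub_mul_cos_nonneg {t : ℝ} (ht : t ∈ Icc 0 π) : 0 ≤ sin t - t * cos t := by
  refine nonneg_of_hasDerivAt_of_nonneg_on_Ioo (f := fun s ↦ sin s - s * cos s)
    (f' := fun s ↦ s * sin s) (fun s ↦ ?_)
    (fun s hs ↦ mul_nonneg hs.1.le (sin_nonneg_of_nonneg_of_le_pi hs.1.le hs.2.le))
    (by simp) ht
  exact ((hasDerivAt_sin s).sub ((hasDerivAt_id' s).mul (hasDerivAt_cos s))).congr_deriv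
    (by ring)

lemma two_sub_two_mul_cos_sub_mul_sin_nonneg {t : ℝ} (ht : t ∈ Icc 0 π) :
    0 ≤ 2 - 2 * cos t - t * sin t := by
  refine nonneg_of_hasDerivAt_of_nonneg_on_Ioo (f := fun s ↦ 2 - 2 * cos s - s * sin s)
    (f' := fun s ↦ sin s - s * cos s) (fun s ↦ ?_)
    (fun s hs ↦ sin_sub_mul_cos_nonneg (Ioo_subset_Icc_self hs)) (by simp) ht
  exact (((hasDerivAt_const s 2).sub ((hasDerivAt_cos s).const_mul 2)).sub
    ((hasDerivAt_id' s).mul (hasDerivAt_sin s))).congr_deriv (by ring)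

lemma three_mul_sin_le_mul_two_add_cos {t : ℝ} (ht : 0 ≤ t) : 3 * sin t ≤ t * (2 + cos t) := by
  rcases le_total t π with htπ | hπt
  · have := nonneg_of_hasDerivAt_of_nonneg_on_Ioo
      (f := fun s ↦ s * (2 + cos s) - 3 * sin s) (f' := fun s ↦ 2 - 2 * cos s - s * sin s)
      (fun s ↦ ((hasDerivAt_id' s).mul ((hasDerivAt_cos s).const_add 2)).sub
        ((hasDerivAt_sin s).const_mul 3) |>.congr_deriv (by ring))
      (fun s hs ↦ two_sub_two_mul_cos_sub_mul_sin_nonneg (Ioo_subset_Icc_self hs)) (by simp)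
      ⟨ht, htπ⟩
    linarith
  · nlinarith [pi_gt_three, sin_le_one t, neg_one_le_cos t]

lemma two_add_cos_pos (θ : ℝ) : 0 < 2 + cos θ := by linarith [neg_one_le_cos θ]

noncomputable def cusa (θ : ℝ) : ℝ := 3 * sin θ / (2 + cos θ)

lemma cusa_le_self {t : ℝ} (ht : 0 ≤ t) : cusa t ≤ t :=
  (div_le_iff₀ (two_add_cos_pos t)).2 (three_mul_sin_le_mul_two_add_cos ht)

lemma cusa_two_mul_le {φ : ℝ} (hφ : 0 ≤ sin φ) : cusa (2 * φ) ≤ 2 * cusa φ := by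
  have hc := two_add_cos_pos φ
  have hc2 : 0 < 2 + (2 * cos φ ^ 2 - 1) := by nlinarith [sq_nonneg (cos φ)]
  have key : 2 * cusa φ - cusa (2 * φ) =
      6 * sin φ * (1 - cos φ) ^ 2 / ((2 + cos φ) * (2 + (2 * cos φ ^ 2 - 1))) := by
    rw [cusa, cusa, sin_two_mul, cos_two_mul]
    field_simp
    ring
  rw [← sub_nonneg, key]
  positivity

lemma cusa_arcsin {x : ℝ} (hx : x ∈ Icc (-1) 1) :
    3 * x / (2 + √(1 - x ^ 2)) = cusa (arcsin x) := by
  rw [cusa, sin_arcsin hx.1 hx.2, cos_arcsin]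

lemma sqrt_one_add_sin_two_mul {φ : ℝ} (h : 0 ≤ cos φ + sin φ) :
    √(1 + sin (2 * φ)) = cos φ + sin φ := by
  rw [← sqrt_sq h, sin_two_mul]
  congr 1
  linear_combination -(sin_sq_add_cos_sq φ)

lemma sqrt_one_sub_sin_two_mul {φ : ℝ} (h : 0 ≤ cos φ - sin φ) :
    √(1 - sin (2 * φ)) = cos φ - sin φ := by
  rw [← sqrt_sq h, sin_two_mul]
  congr 1
  linear_combination -(sin_sq_add_cos_sq φ)

lemma abs_sin_le_cos {φ : ℝ} (hφ : |φ| ≤ π / 4) : |sin φ| ≤ cos φ := by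
  obtain ⟨h₁, h₂⟩ := abs_le.1 hφ
  have hcos : 0 ≤ cos φ := cos_nonneg_of_mem_Icc ⟨by linarith [pi_pos], by linarith [pi_pos]⟩
  have hcos2 : 0 ≤ cos (2 * φ) := cos_nonneg_of_mem_Icc ⟨by linarith, by linarith⟩
  refine abs_le_of_sq_le_sq ?_ hcos
  nlinarith [cos_sq' φ, cos_two_mul φ]

lemma two_mul_cusa_eq {φ : ℝ} (hφ : |sin φ| ≤ cos φ) :
    6 * (√(1 + sin (2 * φ)) - √(1 - sin (2 * φ))) /
      (4 + √(1 + sin (2 * φ)) + √(1 - sin (2 * φ))) = 2 * cusa φ := by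
  obtain ⟨h₁, h₂⟩ := abs_le.1 hφ
  rw [sqrt_one_add_sin_two_mul (by linarith), sqrt_one_sub_sin_two_mul (by linarith), cusa]
  rw [show 4 + (cos φ + sin φ) + (cos φ - sin φ) = 2 * (2 + cos φ) by ring]
  have := two_add_cos_pos φ
  field_simp
  ring

lemma two_mul_cusa_half_arcsin {x : ℝ} (hx : x ∈ Icc (-1) 1) :
    6 * (√(1 + x) - √(1 - x)) / (4 + √(1 + x) + √(1 - x)) = 2 * cusa (arcsin x / 2) := by
  have hφ : |arcsin x / 2| ≤ π / 4 := by
    rw [abs_le]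
    constructor <;> linarith [neg_pi_div_two_le_arcsin x, arcsin_le_pi_div_two x]
  have := two_mul_cusa_eq (abs_sin_le_cos hφ)
  rwa [mul_div_cancel₀ _ two_ne_zero, sin_arcsin hx.1 hx.2] at this

theorem shafer_lower_bounds (x : ℝ) (hx : 0 ≤ x) (hx' : x ≤ 1) :
    3 * x / (2 + Real.sqrt (1 - x ^ 2)) ≤
      6 * (Real.sqrt (1 + x) - Real.sqrt (1 - x)) /
        (4 + Real.sqrt (1 + x) + Real.sqrt (1 - x)) ∧
    6 * (Real.sqrt (1 + x) - Real.sqrt (1 - x)) /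
        (4 + Real.sqrt (1 + x) + Real.sqrt (1 - x)) ≤ Real.arcsin x := by
  have hx₁ : x ∈ Icc (-1) 1 := ⟨by linarith, hx'⟩
  have hθ : 0 ≤ arcsin x / 2 := div_nonneg (arcsin_nonneg.2 hx) zero_le_two
  have hθπ : arcsin x / 2 ≤ π := by linarith [arcsin_le_pi_div_two x, pi_pos]
  rw [cusa_arcsin hx₁, two_mul_cusa_half_arcsin hx₁]
  constructor
  · have := cusa_two_mul_le (sin_nonneg_of_nonneg_of_le_pi hθ hθπ)
    rwa [mul_div_cancel₀ _ two_ne_zero] at this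
  · linarith [cusa_le_self hθ]
end

section
/- For every real number x with 0 ≤ x ≤ 1, the inequalities 3x/(2 + √(1 − x²)) ≤ arcsin x ≤ πx/(2 + √(1 − x²)) hold. -/
/-!
With `x = sin θ`, `θ ∈ [0, π/2]`, the bounds read `3 sin θ ≤ θ (2 + cos θ) ≤ π sin θ`.
The left one (Cusa–Huygens) follows by differentiating twice: the second derivative of
`θ (2 + cos θ) - 3 sin θ` is `sin θ - θ cos θ ≥ 0`. For the right one,
`π sin θ - θ (2 + cos θ)` is concave on `[0, π/2]`, because `θ cos θ ≤ sin θ` and `π > 3`,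
and it vanishes at both ends.
-/

open Real Set

lemma nonneg_of_hasDerivAt_nonneg {f f' : ℝ → ℝ} {a x : ℝ} (hf : ∀ t, HasDerivAt f (f' t) t)
    (hf₀ : f 0 = 0) (hf' : ∀ t ∈ Ioo 0 a, 0 ≤ f' t) (hx : x ∈ Icc 0 a) : 0 ≤ f x := by
  have hmono : MonotoneOn f (Icc 0 a) :=
    monotoneOn_of_hasDerivWithinAt_nonneg (convex_Icc 0 a)
      (fun t _ ↦ (hf t).continuousAt.continuousWithinAt) (fun t _ ↦ (hf t).hasDerivWithinAt)
      (by rwa [interior_Icc])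
  simpa [hf₀] using hmono (left_mem_Icc.2 (hx.1.trans hx.2)) hx hx.1

lemma mul_cos_le_sin {θ : ℝ} (hθ : θ ∈ Icc 0 π) : θ * cos θ ≤ sin θ := by
  have hderiv (t : ℝ) : HasDerivAt (fun t ↦ sin t - t * cos t) (t * sin t) t :=
    ((hasDerivAt_sin t).sub ((hasDerivAt_id' t).mul (hasDerivAt_cos t))).congr_deriv
      (by ring)
  have := nonneg_of_hasDerivAt_nonneg hderiv (by simp)
    (fun t ht ↦ mul_nonneg ht.1.le (sin_nonneg_of_nonneg_of_le_pi ht.1.le ht.2.le)) hθ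
  linarith

lemma three_mul_sin_le_mul_two_add_cos_s7 {θ : ℝ} (hθ : θ ∈ Icc 0 π) :
    3 * sin θ ≤ θ * (2 + cos θ) := by
  have hderiv' (t : ℝ) :
      HasDerivAt (fun t ↦ 2 - 2 * cos t - t * sin t) (sin t - t * cos t) t :=
    ((((hasDerivAt_cos t).const_mul 2).const_sub 2).sub
      ((hasDerivAt_id' t).mul (hasDerivAt_sin t))).congr_deriv (by ring)
  have hderiv (t : ℝ) :
      HasDerivAt (fun t ↦ t * (2 + cos t) - 3 * sin t) (2 - 2 * cos t - t * sin t) t :=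
    (((hasDerivAt_id' t).mul ((hasDerivAt_cos t).const_add 2)).sub
      ((hasDerivAt_sin t).const_mul 3)).congr_deriv (by ring)
  have hderiv_nonneg (t : ℝ) (ht : t ∈ Icc 0 π) : 0 ≤ 2 - 2 * cos t - t * sin t :=
    nonneg_of_hasDerivAt_nonneg (f := fun t ↦ 2 - 2 * cos t - t * sin t) hderiv' (by simp)
      (fun s hs ↦ sub_nonneg.2 (mul_cos_le_sin (Ioo_subset_Icc_self hs))) ht
  have := nonneg_of_hasDerivAt_nonneg hderiv (by simp)
    (fun t ht ↦ hderiv_nonneg t (Ioo_subset_Icc_self ht)) hθ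
  linarith

lemma mul_two_add_cos_le_pi_mul_sin {θ : ℝ} (hθ : θ ∈ Icc 0 (π / 2)) :
    θ * (2 + cos θ) ≤ π * sin θ := by
  set g : ℝ → ℝ := fun t ↦ π * sin t - t * (2 + cos t)
  have hderiv (t : ℝ) :
      HasDerivAt g (π * cos t - (2 + cos t) + t * sin t) t :=
    (((hasDerivAt_sin t).const_mul π).sub
      ((hasDerivAt_id' t).mul ((hasDerivAt_cos t).const_add 2))).congr_deriv (by ring)
  have hderiv2 (t : ℝ) :
      HasDerivAt (fun t ↦ π * cos t - (2 + cos t) + t * sin t)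
        ((2 - π) * sin t + t * cos t) t :=
    ((((hasDerivAt_cos t).const_mul π).sub ((hasDerivAt_cos t).const_add 2)).add
      ((hasDerivAt_id' t).mul (hasDerivAt_sin t))).congr_deriv (by ring)
  have hconcave : ConcaveOn ℝ (Icc 0 (π / 2)) g := by
    refine concaveOn_of_hasDerivWithinAt2_nonpos (convex_Icc _ _)
      (fun t _ ↦ (hderiv t).continuousAt.continuousWithinAt)
      (fun t _ ↦ (hderiv t).hasDerivWithinAt) (fun t _ ↦ (hderiv2 t).hasDerivWithinAt) ?_
    rw [interior_Icc]
    intro t ht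
    have hsin : 0 ≤ sin t := sin_nonneg_of_nonneg_of_le_pi ht.1.le (by linarith [pi_pos, ht.2])
    have hmul_cos : t * cos t ≤ sin t := mul_cos_le_sin ⟨ht.1.le, by linarith [pi_pos, ht.2]⟩
    nlinarith [pi_gt_three]
  have hends : min (g 0) (g (π / 2)) = 0 := by simp [g]
  have := hconcave.min_le_of_mem_Icc (left_mem_Icc.2 (by positivity))
    (right_mem_Icc.2 (by positivity)) hθ
  simp only [hends, g] at this
  linarith

theorem fink_bounds (x : ℝ) (hx : 0 ≤ x) (hx' : x ≤ 1) :
    3 * x / (2 + Real.sqrt (1 - x ^ 2)) ≤ Real.arcsin x ∧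
    Real.arcsin x ≤ Real.pi * x / (2 + Real.sqrt (1 - x ^ 2)) := by
  have hθ : arcsin x ∈ Icc 0 (π / 2) := ⟨arcsin_nonneg.2 hx, arcsin_le_pi_div_two x⟩
  have hsin : sin (arcsin x) = x := sin_arcsin (by linarith) hx'
  have hcos : cos (arcsin x) = √(1 - x ^ 2) := cos_arcsin x
  have hden : 0 < 2 + √(1 - x ^ 2) := by positivity
  have hleft := three_mul_sin_le_mul_two_add_cos_s7 ⟨hθ.1, hθ.2.trans (by linarith [pi_pos])⟩
  have hright := mul_two_add_cos_le_pi_mul_sin hθ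
  rw [hsin, hcos] at hleft hright
  constructor
  · rw [div_le_iff₀ hden]; linarith
  · rw [le_div_iff₀ hden]; linarith
end

section
/- For every real number x with 0 ≤ x ≤ 1, the inequalities arcsin x ≤ (π/(π − 2))·x / (2/(π − 2) + √(1 − x²)) ≤ πx/(2 + √(1 − x²)) hold. -/
/-!
Put `θ = arcsin x`, so that `x = sin θ` and `√(1 - x²) = cos θ`. Both bounds reduce to
`θ (2 + (π - 2) cos θ) ≤ π sin θ` on `[0, π/2]`, an inequality with equality at both ends.
Near `0` it follows from the Taylor bounds `sin θ ≥ θ - θ³/6` and `cos θ ≤ 1 - θ²/2 + θ⁴/24`,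
which leave `θ³ (π/3 - 1 - (π - 2) θ²/24) ≥ 0`; near `π/2`, writing `θ = π/2 - s`, from
`cos s ≥ 1 - s²/2` and `sin s ≤ s - s³/6 + s⁵/120`, whose leading term is `(2 - π(π - 2)/2) s > 0`.
The two ranges overlap because `π/2 - 0.98 < 0.6`.
-/

open Real Set

namespace Real

theorem cos_le_one_sub_sq_div_two_add_pow_four_div (x : ℝ) :
    cos x ≤ 1 - x ^ 2 / 2 + x ^ 4 / 24 := by
  wlog hx : 0 ≤ x
  · have := this (-x) (by linarith)
    rwa [cos_neg, Even.neg_pow (by decide), Even.neg_pow (by decide)] at this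
  let f (t : ℝ) : ℝ := 1 - t ^ 2 / 2 + t ^ 4 / 24 - cos t
  have hderiv (t : ℝ) : deriv f t = sin t - (t - t ^ 3 / 6) := by
    simp (disch := fun_prop) [f]
    ring
  have hmono : MonotoneOn f (Ici 0) := by
    apply monotoneOn_of_deriv_nonneg (convex_Ici 0) (by fun_prop) (by fun_prop)
    intro t ht
    rw [interior_Ici] at ht
    rw [hderiv, sub_nonneg]
    exact sin_ge_sub_cube ht.le
  have := hmono self_mem_Ici hx hx
  simp only [f, cos_zero] at this
  linarith

theorem sin_le_sub_cube_add_pow_five_div {x : ℝ} (hx : 0 ≤ x) :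
    sin x ≤ x - x ^ 3 / 6 + x ^ 5 / 120 := by
  let f (t : ℝ) : ℝ := t - t ^ 3 / 6 + t ^ 5 / 120 - sin t
  have hderiv (t : ℝ) : deriv f t = 1 - t ^ 2 / 2 + t ^ 4 / 24 - cos t := by
    simp (disch := fun_prop) [f]
    ring
  have hmono : MonotoneOn f (Ici 0) := by
    apply monotoneOn_of_deriv_nonneg (convex_Ici 0) (by fun_prop) (by fun_prop)
    intro t _
    rw [hderiv, sub_nonneg]
    exact cos_le_one_sub_sq_div_two_add_pow_four_div t
  have := hmono self_mem_Ici hx hx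
  simp only [f, sin_zero] at this
  linarith

end Real

lemma mul_two_add_mul_cos_le_pi_mul_sin_of_le {θ : ℝ} (h₀ : 0 ≤ θ) (h₁ : θ ≤ 0.98) :
    θ * (2 + (π - 2) * cos θ) ≤ π * sin θ := by
  have hπ := pi_gt_d2
  have hcos := cos_le_one_sub_sq_div_two_add_pow_four_div θ
  have hsin := sin_ge_sub_cube h₀
  have hθ2 : θ ^ 2 ≤ 0.98 ^ 2 := pow_le_pow_left₀ h₀ h₁ 2
  have hcubic : 0 ≤ θ ^ 3 * ((π / 3 - 1) - (π - 2) * θ ^ 2 / 24) := by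
    apply mul_nonneg (by positivity)
    nlinarith [mul_le_mul_of_nonneg_left hθ2 (by linarith : (0:ℝ) ≤ π - 2)]
  nlinarith [mul_le_mul_of_nonneg_left hcos (by nlinarith : 0 ≤ θ * (π - 2))]

lemma pi_div_two_sub_mul_two_add_mul_sin_le_pi_mul_cos {s : ℝ} (h₀ : 0 ≤ s) (h₁ : s ≤ 0.6) :
    (π / 2 - s) * (2 + (π - 2) * sin s) ≤ π * cos s := by
  have hπ := pi_gt_d2
  have hπ' := pi_lt_d4
  set q := s ^ 2 / 6 - s ^ 4 / 120 with hq
  have hq_nonneg : 0 ≤ q := by nlinarith [mul_nonneg (sq_nonneg s) (by nlinarith : 0 ≤ 20 - s ^ 2)]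
  have hsin : sin s ≤ s - s * q := by
    have := sin_le_sub_cube_add_pow_five_div h₀
    rw [hq]; linarith
  -- replace the `π`-dependent coefficients by rational bounds, leaving a polynomial in `s` alone
  have hlin : 0.205 ≤ 2 - π * (π - 2) / 2 := by nlinarith
  have hslope : -0.43 * s ≤ s * (π / 2 - 2) := by nlinarith
  have hcoeff : (1.57 - s) * 1.14 * q ≤ (π / 2 - s) * (π - 2) * q := by
    apply mul_le_mul_of_nonneg_right _ hq_nonneg
    exact mul_le_mul (by linarith) (by linarith) (by norm_num) (by linarith)
  have hpoly : 0 ≤ 0.205 - 0.43 * s + (1.57 - s) * 1.14 * q := by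
    have h₁' := sub_nonneg.2 h₁
    nlinarith [mul_nonneg h₀ h₁', mul_nonneg (mul_nonneg h₀ h₀) h₁', sq_nonneg (s - 0.5),
      mul_nonneg (mul_nonneg h₀ h₀) (mul_nonneg h₀ h₁'),
      mul_nonneg (mul_nonneg h₀ h₀) (mul_nonneg (mul_nonneg h₀ h₀) h₁')]
  have hdefect : 0 ≤ (2 - π * (π - 2) / 2) + s * (π / 2 - 2) + (π / 2 - s) * (π - 2) * q := by
    linarith
  calc (π / 2 - s) * (2 + (π - 2) * sin s)
      ≤ (π / 2 - s) * (2 + (π - 2) * (s - s * q)) := by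
        gcongr
        · linarith
        · linarith
    _ = π * (1 - s ^ 2 / 2)
          - s * ((2 - π * (π - 2) / 2) + s * (π / 2 - 2) + (π / 2 - s) * (π - 2) * q) := by
        ring
    _ ≤ π * (1 - s ^ 2 / 2) := sub_le_self _ (mul_nonneg h₀ hdefect)
    _ ≤ π * cos s := by gcongr; exact one_sub_sq_div_two_le_cos

lemma mul_two_add_mul_cos_le_pi_mul_sin {θ : ℝ} (h₀ : 0 ≤ θ) (h₁ : θ ≤ π / 2) :
    θ * (2 + (π - 2) * cos θ) ≤ π * sin θ := by
  rcases le_or_gt θ 0.98 with hθ | hθ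
  · exact mul_two_add_mul_cos_le_pi_mul_sin_of_le h₀ hθ
  · have := pi_div_two_sub_mul_two_add_mul_sin_le_pi_mul_cos (s := π / 2 - θ) (by linarith)
      (by linarith [pi_lt_d2])
    rwa [sin_pi_div_two_sub, cos_pi_div_two_sub, sub_sub_cancel] at this

lemma arcsin_mul_two_add_mul_sqrt_le {x : ℝ} (h₀ : 0 ≤ x) (h₁ : x ≤ 1) :
    arcsin x * (2 + (π - 2) * √(1 - x ^ 2)) ≤ π * x := by
  have := mul_two_add_mul_cos_le_pi_mul_sin (arcsin_nonneg.2 h₀) (arcsin_le_pi_div_two x)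
  rwa [cos_arcsin, sin_arcsin (by linarith) h₁] at this

theorem malesevic_upper_bounds (x : ℝ) (hx : 0 ≤ x) (hx' : x ≤ 1) :
    Real.arcsin x ≤
      (Real.pi / (Real.pi - 2)) * x / (2 / (Real.pi - 2) + Real.sqrt (1 - x ^ 2)) ∧
    (Real.pi / (Real.pi - 2)) * x / (2 / (Real.pi - 2) + Real.sqrt (1 - x ^ 2)) ≤
      Real.pi * x / (2 + Real.sqrt (1 - x ^ 2)) := by
  have hπ : 1 < π - 2 := by linarith [pi_gt_three]
  have hsqrt : 0 ≤ √(1 - x ^ 2) := sqrt_nonneg _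
  have hform : π / (π - 2) * x / (2 / (π - 2) + √(1 - x ^ 2))
      = π * x / (2 + (π - 2) * √(1 - x ^ 2)) := by
    field_simp
  rw [hform]
  constructor
  · rw [le_div_iff₀ (by positivity)]
    exact arcsin_mul_two_add_mul_sqrt_le hx hx'
  · apply div_le_div_of_nonneg_left (by positivity) (by positivity)
    nlinarith
end
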